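/- arXiv:1312.3076 — 8 statements merged into one kernel-verified Lean document; each statement's English description precedes it below -/
import Mathlib

section
/- Let G be a chordal graph on n vertices with perfect elimination ordering v_1, ..., v_n, and let v_n be the last vertex with i ∈ N_G(v_n). If v_n has degree at least 2, then v_n is a simplicial vertex of the graph K = G \ {v_n, i}, and v_1, ..., v_n is a perfect elimination ordering of K; in particular K is chordal. -/
/-- A graph is chordal if every cycle of length at least 4 has a chord. -/
def IsChordal {V : Type*} (G : SimpleGraph V) : Prop :=
  ∀ (v : V) (w : G.Walk v v), w.IsCycle → 4 ≤ w.length →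
    ∃ a b, a ∈ w.support ∧ b ∈ w.support ∧ G.Adj a b ∧ s(a, b) ∉ w.edges

/-- `σ 0, σ 1, …, σ (n-1)` is a perfect elimination ordering of `G`:
each `σ i` is simplicial in the subgraph induced by `{σ j : j ≤ i}`. -/
def IsPEO {n : ℕ} (G : SimpleGraph (Fin n)) (σ : Equiv.Perm (Fin n)) : Prop :=
  ∀ i a b : Fin n, (∃ j, j ≤ i ∧ σ j = a) → (∃ j, j ≤ i ∧ σ j = b) →
    G.Adj (σ i) a → G.Adj (σ i) b → a ≠ b → G.Adj a b

open SimpleGraph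

lemma walk_support_getElem {V : Type*} {G : SimpleGraph V} {u v : V} (p : G.Walk u v) :
    ∀ (i : ℕ) (h : i < p.support.length), p.support[i] = p.getVert i := by
  induction p with
  | nil =>
    intro i h
    simp only [Walk.support_nil, List.length_singleton] at h
    interval_cases i
    simp
  | cons h p ih =>
    intro i hi
    cases i with
    | zero => simp
    | succ j =>
      simp only [Walk.support_cons, List.getElem_cons_succ, Walk.getVert_cons_succ]
      exact ih j (by simpa [Walk.length_support] using hi)

lemma cycle_getVert_inj {V : Type*} {G : SimpleGraph V} {v : V} {w : G.Walk v v}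
    (hw : w.IsCycle) {a b : ℕ} (ha : 1 ≤ a) (ha' : a ≤ w.length) (hb : 1 ≤ b)
    (hb' : b ≤ w.length) (hab : w.getVert a = w.getVert b) : a = b := by
  have hnd : w.support.tail.Nodup := hw.2
  have hlen : w.support.length = w.length + 1 := Walk.length_support w
  have htl : w.support.tail.length = w.length := by
    rw [List.length_tail, hlen]; omega
  have h1 : w.support.tail[a-1]'(by omega) = w.getVert a := by
    rw [List.getElem_tail, walk_support_getElem w (a-1+1) (by omega)]
    congr 1; omega
  have h2 : w.support.tail[b-1]'(by omega) = w.getVert b := by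
    rw [List.getElem_tail, walk_support_getElem w (b-1+1) (by omega)]
    congr 1; omega
  have hia : a - 1 < w.support.tail.length := by omega
  have hib : b - 1 < w.support.tail.length := by omega
  have := (hnd.getElem_inj_iff (hi := hia) (hj := hib)).mp (by rw [h1, h2]; exact hab)
  omega

lemma cycle_snd_penult {V : Type*} {K : SimpleGraph V} {v : V} (w : K.Walk v v)
    (hc : w.IsCycle) (hl : 4 ≤ w.length) :
    K.Adj v (w.getVert 1) ∧ K.Adj v (w.getVert (w.length - 1)) ∧
      w.getVert 1 ≠ w.getVert (w.length - 1) ∧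
      s(w.getVert 1, w.getVert (w.length - 1)) ∉ w.edges := by
  set L := w.length with hL
  set x := w.getVert 1 with hx
  set y := w.getVert (L - 1) with hy
  have hvx : K.Adj v x := by
    have := w.adj_getVert_succ (i := 0) (by omega)
    simpa using this
  have hyv : K.Adj y v := by
    have := w.adj_getVert_succ (i := L - 1) (by omega)
    have hLL : L - 1 + 1 = L := by omega
    rw [hLL, hL, Walk.getVert_length] at this
    exact this
  refine ⟨hvx, hyv.symm, ?_, ?_⟩
  · intro h
    have := cycle_getVert_inj hc (a := 1) (b := L - 1) le_rfl (by omega) (by omega) (by omega) h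
    omega
  · intro hmem
    have : w.toSubgraph.Adj x y := by
      rw [← SimpleGraph.Subgraph.mem_edgeSet]
      exact (Walk.mem_edges_toSubgraph w).mpr hmem
    rw [Walk.toSubgraph_adj_iff] at this
    obtain ⟨j, hj, hjl⟩ := this
    rw [Sym2.eq_iff] at hj
    rcases hj with ⟨hj1, hj2⟩ | ⟨hj1, hj2⟩
    · -- getVert j = x, getVert (j+1) = y
      rcases Nat.eq_zero_or_pos j with rfl | hjpos
      · exact hvx.ne' (by simpa using hj1.symm)
      · have hj1' : j = 1 :=
          cycle_getVert_inj hc (a := j) (b := 1) hjpos (by omega) le_rfl (by omega) hj1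
        subst hj1'
        have := cycle_getVert_inj hc (a := 2) (b := L - 1) (by omega) (by omega) (by omega)
          (by omega) hj2
        omega
    · -- getVert j = y, getVert (j+1) = x
      have hj1' : j + 1 = 1 :=
        cycle_getVert_inj hc (a := j + 1) (b := 1) (by omega) (by omega) le_rfl (by omega) hj2
      have : j = 0 := by omega
      subst this
      have hvy : v = y := by simpa using hj1
      exact hyv.ne hvy.symm

theorem stmt1 {n : ℕ} (hn : 0 < n) (G : SimpleGraph (Fin n)) (σ : Equiv.Perm (Fin n))
    (hchordal : IsChordal G) (hpeo : IsPEO G σ) (i : Fin n)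
    (hi : G.Adj (σ ⟨n - 1, by omega⟩) i)
    (hdeg : 2 ≤ (G.neighborSet (σ ⟨n - 1, by omega⟩)).ncard)
    (K : SimpleGraph (Fin n)) (hK : K = G.deleteEdges {s(σ ⟨n - 1, by omega⟩, i)}) :
    (∀ a b, K.Adj (σ ⟨n - 1, by omega⟩) a → K.Adj (σ ⟨n - 1, by omega⟩) b → a ≠ b → K.Adj a b)
      ∧ IsPEO K σ ∧ IsChordal K := by
  have hlast : ∀ j : Fin n, j ≤ (⟨n - 1, by omega⟩ : Fin n) := by
    intro j
    have := j.isLt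
    rw [Fin.le_def]
    simp only []
    omega
  set v : Fin n := σ ⟨n - 1, by omega⟩ with hv
  have hKadj : ∀ a b, K.Adj a b ↔ G.Adj a b ∧ s(a, b) ≠ s(v, i) := by
    intro a b
    rw [hK]
    simp [SimpleGraph.deleteEdges_adj]
  -- Part 1: simplicial
  have hsimp : ∀ a b, K.Adj v a → K.Adj v b → a ≠ b → K.Adj a b := by
    intro a b ha hb hab
    rw [hKadj] at ha hb ⊢
    refine ⟨?_, ?_⟩
    · exact hpeo ⟨n - 1, by omega⟩ a b ⟨σ.symm a, hlast _, σ.apply_symm_apply a⟩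
        ⟨σ.symm b, hlast _, σ.apply_symm_apply b⟩ ha.1 hb.1 hab
    · intro hmem
      rw [Sym2.eq_iff] at hmem
      rcases hmem with ⟨rfl, _⟩ | ⟨_, rfl⟩
      · exact ha.1.ne' rfl
      · exact hb.1.ne' rfl
  refine ⟨hsimp, ?_, ?_⟩
  -- Part 2: PEO
  · intro ii a b ⟨j, hj, hja⟩ ⟨k, hk, hkb⟩ hKa hKb hab
    rw [hKadj] at hKa hKb ⊢
    refine ⟨hpeo ii a b ⟨j, hj, hja⟩ ⟨k, hk, hkb⟩ hKa.1 hKb.1 hab, ?_⟩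
    intro hmem
    rw [Sym2.eq_iff] at hmem
    have hii : ∀ m : Fin n, m ≤ ii → σ m = v → σ ii = v := by
      intro m hm hmv
      have hmeq : m = (⟨n - 1, by omega⟩ : Fin n) := σ.injective hmv
      rw [hmeq] at hm
      have h1 := hm
      rw [Fin.le_def] at h1
      have h2 := ii.isLt
      have : ii = (⟨n - 1, by omega⟩ : Fin n) := by
        apply Fin.ext
        simp only [] at h1 ⊢
        omega
      rw [this]
    rcases hmem with ⟨hav, _⟩ | ⟨_, hbv⟩
    · exact hKa.1.ne' ((hii j hj (hja.trans hav)).trans hav.symm).symm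
    · exact hKb.1.ne' ((hii k hk (hkb.trans hbv)).trans hbv.symm).symm
  -- Part 3: chordal
  · intro u w hwc hwl
    have hKle : K ≤ G := by rw [hK]; exact SimpleGraph.deleteEdges_le _
    have hedges : ∀ e ∈ w.edges, e ∈ G.edgeSet := fun e he =>
      SimpleGraph.edgeSet_mono hKle (w.edges_subset_edgeSet he)
    set wG := w.transfer G hedges with hwG
    obtain ⟨a, b, haS, hbS, hGab, hab_ne⟩ :=
      hchordal u wG (hwc.transfer hedges) (by rwa [SimpleGraph.Walk.length_transfer])
    rw [SimpleGraph.Walk.support_transfer] at haS hbS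
    rw [SimpleGraph.Walk.edges_transfer] at hab_ne
    by_cases hcase : s(a, b) = s(v, i)
    · -- the chord is the deleted edge; use the simplicial structure at v
      have hvS : v ∈ w.support := by
        rw [Sym2.eq_iff] at hcase
        rcases hcase with ⟨rfl, _⟩ | ⟨_, rfl⟩
        exacts [haS, hbS]
      set w' := w.rotate v hvS with hw'
      have hc' : w'.IsCycle := hwc.rotate hvS
      have hlen' : w'.length = w.length := by
        rw [← SimpleGraph.Walk.length_edges, ← SimpleGraph.Walk.length_edges]
        exact (SimpleGraph.Walk.rotate_edges w v hvS).perm.length_eq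
      obtain ⟨hvx, hvy, hxy, hnot⟩ := cycle_snd_penult w' hc' (by omega)
      set x := w'.getVert 1 with hx
      set y := w'.getVert (w'.length - 1) with hy
      have hmemsup : ∀ z : Fin n, K.Adj v z → z ∈ w'.support → z ∈ w.support := by
        intro z hz hzs
        rw [w'.support_eq_cons, List.mem_cons] at hzs
        rcases hzs with rfl | hzs
        · exact hvS
        · rw [w.support_eq_cons]
          exact List.mem_cons_of_mem _
            (((SimpleGraph.Walk.support_rotate w v hvS).perm.mem_iff).mp hzs)
      refine ⟨x, y, ?_, ?_, hsimp x y hvx hvy hxy, ?_⟩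
      · exact hmemsup x hvx (by
          rw [SimpleGraph.Walk.mem_support_iff_exists_getVert]
          exact ⟨1, rfl, by omega⟩)
      · exact hmemsup y hvy (by
          rw [SimpleGraph.Walk.mem_support_iff_exists_getVert]
          exact ⟨w'.length - 1, rfl, by omega⟩)
      · intro hmem
        exact hnot (((SimpleGraph.Walk.rotate_edges w v hvS).perm.mem_iff).mpr hmem)
    · exact ⟨a, b, haS, hbS, (hKadj a b).mpr ⟨hGab, hcase⟩, hab_ne⟩
end

section
/- Let K be a graph satisfying the edge-distance condition, let v be a simplicial vertex of K and i a vertex with N_K(v) ⊆ N_K(i) and {v,i} ∉ E(K). Define J to be the graph on subsets of the vertex set of K_n with edge set E(J) = { {q, l} : q ∈ N_K(i), l ∈ V(K_n) \ {v}, q ≠ l } ∪ { {v, p} : p ∈ N_K(v) }. Then J satisfies the edge-distance condition. -/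
/-- The edge-distance condition. -/
def EdgeDist {V : Type*} (G : SimpleGraph V) : Prop :=
  ∀ ⦃i j k l : V⦄, G.Adj i j → G.Adj k l → i ≠ k → i ≠ l → j ≠ k → j ≠ l →
    (G.Adj i k ∨ G.Adj i l ∨ G.Adj j k ∨ G.Adj j l)

theorem stmt3 {n : ℕ} (K : SimpleGraph (Fin n)) (hed : EdgeDist K) (v i : Fin n)
    (hsimp : ∀ a b, K.Adj v a → K.Adj v b → a ≠ b → K.Adj a b)
    (hsub : K.neighborSet v ⊆ K.neighborSet i) (hvi : ¬ K.Adj v i)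
    (J : SimpleGraph (Fin n))
    (hJ : J = SimpleGraph.fromRel (fun a b => (K.Adj i a ∧ b ≠ v) ∨ (a = v ∧ K.Adj v b))) :
    EdgeDist J := by
  have key : ∀ x y : Fin n, J.Adj x y → K.Adj i x ∨ K.Adj i y := by
    intro x y h
    rw [hJ, SimpleGraph.fromRel_adj] at h
    rcases h.2 with (⟨h1, _⟩ | ⟨h1, h2⟩) | (⟨h1, _⟩ | ⟨h1, h2⟩)
    · exact Or.inl h1
    · exact Or.inr (hsub h2)
    · exact Or.inr h1
    · exact Or.inl (hsub h2)
  have adj : ∀ x y : Fin n, K.Adj i x → K.Adj i y → x ≠ y → J.Adj x y := by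
    intro x y hx hy hxy
    rw [hJ, SimpleGraph.fromRel_adj]
    refine ⟨hxy, ?_⟩
    left
    left
    refine ⟨hx, ?_⟩
    rintro rfl
    exact hvi hy.symm
  intro a b c d hab hcd hac had hbc hbd
  rcases key a b hab with ha | hb <;> rcases key c d hcd with hc | hd
  · exact Or.inl (adj a c ha hc hac)
  · exact Or.inr (Or.inl (adj a d ha hd had))
  · exact Or.inr (Or.inr (Or.inl (adj b c hb hc hbc)))
  · exact Or.inr (Or.inr (Or.inr (adj b d hb hd hbd)))
end

section
/- Let K be a connected chordal subgraph of the complete graph K_n, let v be a simplicial vertex of K and i a vertex with N_K(v) ⊆ N_K(i), N_K(i) nonempty, and {v,i} ∉ E(K). Define J to be the graph with edge set E(J) = { {q, l} : q ∈ N_K(i), l ∈ [n] \ {v}, q ≠ l } ∪ { {v, p} : p ∈ N_K(v) } and vertex set the union of the endpoints of these edges. Then J is connected and chordal. -/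
open SimpleGraph

lemma walk_support_get {V : Type*} {G : SimpleGraph V} :
    ∀ {u v : V} (p : G.Walk u v) (k : ℕ) (hk : k < p.support.length),
      p.support.get ⟨k, hk⟩ = p.getVert k := by
  intro u v p
  induction p with
  | nil =>
    intro k hk
    simp only [Walk.support_nil, List.length_cons, List.length_nil] at hk
    interval_cases k
    simp [Walk.getVert]
  | cons h q ih =>
    intro k hk
    cases k with
    | zero => simp [Walk.support_cons, Walk.getVert_zero]
    | succ k =>
      rw [Walk.getVert_cons_succ]
      exact ih k (by simp only [Walk.support_cons, List.length_cons] at hk; omega)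

lemma walk_getVert_mem_support {V : Type*} {G : SimpleGraph V} {u v : V}
    (p : G.Walk u v) (k : ℕ) : p.getVert k ∈ p.support := by
  rw [Walk.mem_support_iff_exists_getVert]
  rcases le_or_gt k p.length with h | h
  · exact ⟨k, rfl, h⟩
  · exact ⟨p.length, by rw [Walk.getVert_length, Walk.getVert_of_length_le _ h.le], le_rfl⟩

lemma cycle_getVert_injOn {V : Type*} {G : SimpleGraph V} {u : V} {p : G.Walk u u}
    (hp : p.IsCycle) {j k : ℕ} (hj : j < p.length) (hk : k < p.length)
    (h : p.getVert j = p.getVert k) : j = k := by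
  have hnd := hp.support_nodup
  have hlt : p.support.tail.length = p.length := by
    rw [List.length_tail, Walk.length_support]; omega
  have hget : ∀ (m : ℕ) (hm : m < p.length),
      p.support.tail.get ⟨m, by rw [hlt]; omega⟩ = p.getVert (m + 1) := by
    intro m hm
    rw [List.get_tail _ _ _ (by rw [Walk.length_support]; omega)]
    exact walk_support_get p (m + 1) _
  have h0 : p.support.tail.get ⟨p.length - 1, by rw [hlt]; omega⟩ = p.getVert 0 := by
    rw [hget (p.length - 1) (by omega)]
    rw [show p.length - 1 + 1 = p.length from by omega, Walk.getVert_length,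
      Walk.getVert_zero]
  cases j with
  | zero =>
    cases k with
    | zero => rfl
    | succ k =>
      have hk' : k < p.length := by omega
      have := hnd.get_inj_iff.mp (h0.trans ((h.trans (hget k hk').symm)))
      rw [Fin.mk_eq_mk] at this
      omega
  | succ j =>
    cases k with
    | zero =>
      have hj' : j < p.length := by omega
      have := hnd.get_inj_iff.mp ((hget j hj').trans (h.trans h0.symm))
      rw [Fin.mk_eq_mk] at this
      omega
    | succ k =>
      have hj' : j < p.length := by omega
      have hk' : k < p.length := by omega
      have := hnd.get_inj_iff.mp ((hget j hj').trans (h.trans (hget k hk').symm))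
      rw [Fin.mk_eq_mk] at this
      omega

lemma walk_edge_index {V : Type*} {G : SimpleGraph V} {a b : V} :
    ∀ {u v : V} (p : G.Walk u v), s(a, b) ∈ p.edges →
      ∃ j < p.length, (p.getVert j = a ∧ p.getVert (j+1) = b) ∨
        (p.getVert j = b ∧ p.getVert (j+1) = a) := by
  intro u v p
  induction p with
  | nil => intro h; simp at h
  | cons hadj q ih =>
    intro h
    rw [Walk.edges_cons, List.mem_cons] at h
    rcases h with h | h
    · rw [Sym2.eq_iff] at h
      refine ⟨0, by simp [Walk.length_cons], ?_⟩
      rcases h with ⟨rfl, rfl⟩ | ⟨rfl, rfl⟩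
      · exact Or.inl ⟨Walk.getVert_zero _, by rw [Walk.getVert_cons_succ, Walk.getVert_zero]⟩
      · exact Or.inr ⟨Walk.getVert_zero _, by rw [Walk.getVert_cons_succ, Walk.getVert_zero]⟩
    · obtain ⟨j, hj, hor⟩ := ih h
      refine ⟨j + 1, by rw [Walk.length_cons]; omega, ?_⟩
      simpa only [Walk.getVert_cons_succ] using hor

theorem stmt4 {n : ℕ} (K : SimpleGraph (Fin n))
    (hconn : ∀ a b, a ∈ K.support → b ∈ K.support → K.Reachable a b)
    (hchordal : IsChordal K) (v i : Fin n)
    (hsimp : ∀ a b, K.Adj v a → K.Adj v b → a ≠ b → K.Adj a b)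
    (hsub : K.neighborSet v ⊆ K.neighborSet i)
    (hne : (K.neighborSet i).Nonempty) (hvi : ¬ K.Adj v i)
    (J : SimpleGraph (Fin n))
    (hJ : J = SimpleGraph.fromRel (fun a b => (K.Adj i a ∧ b ≠ v) ∨ (a = v ∧ K.Adj v b))) :
    (J.induce J.support).Connected ∧ IsChordal J := by
  have hAdj : ∀ x y, J.Adj x y ↔ x ≠ y ∧
      (((K.Adj i x ∧ y ≠ v) ∨ (x = v ∧ K.Adj v y)) ∨
       ((K.Adj i y ∧ x ≠ v) ∨ (y = v ∧ K.Adj v x))) := by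
    subst hJ; intro x y; exact SimpleGraph.fromRel_adj _ x y
  have hiv : ¬ K.Adj i v := fun h => hvi h.symm
  have hSv : ∀ x, K.Adj i x → x ≠ v := fun x h hx => hiv (hx ▸ h)
  have hA : ∀ x y, J.Adj x y → K.Adj i x ∨ K.Adj i y := by
    intro x y h
    rw [hAdj] at h
    rcases h.2 with (⟨h1, _⟩ | ⟨_, h1⟩) | (⟨h1, _⟩ | ⟨_, h1⟩)
    · exact Or.inl h1
    · exact Or.inr (hsub h1)
    · exact Or.inr h1
    · exact Or.inl (hsub h1)
  have hC : ∀ a b, K.Adj i a → K.Adj i b → a ≠ b → J.Adj a b := by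
    intro a b ha hb hab
    rw [hAdj]
    exact ⟨hab, Or.inl (Or.inl ⟨ha, hSv b hb⟩)⟩
  have hNv : ∀ y, J.Adj v y → K.Adj v y := by
    intro y h
    rw [hAdj] at h
    obtain ⟨hne', h⟩ := h
    rcases h with (⟨h1, _⟩ | ⟨_, h1⟩) | (⟨_, h1⟩ | ⟨h1, _⟩)
    · exact absurd h1 hiv
    · exact h1
    · exact absurd rfl h1
    · exact absurd h1.symm hne'
  obtain ⟨q, hq⟩ := hne
  rw [SimpleGraph.mem_neighborSet] at hq
  have hqv : q ≠ v := hSv q hq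
  have hqi : q ≠ i := fun h => (K.irrefl (h ▸ hq))
  have hqJi : J.Adj q i := by
    rw [hAdj]
    refine ⟨hqi, ?_⟩
    by_cases hiveq : i = v
    · exact Or.inr (Or.inr ⟨hiveq, hiveq ▸ hq⟩)
    · exact Or.inl (Or.inl ⟨hq, hiveq⟩)
  have hqs : q ∈ J.support := (SimpleGraph.mem_support J).mpr ⟨i, hqJi⟩
  -- hub adjacency
  have hhub : ∀ x, x ≠ v → x ≠ q → J.Adj q x := by
    intro x hxv hxq
    rw [hAdj]
    exact ⟨fun h => hxq h.symm, Or.inl (Or.inl ⟨hq, hxv⟩)⟩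
  constructor
  · -- connectivity
    have hstep : ∀ (a b : Fin n) (ha : a ∈ J.support) (hb : b ∈ J.support),
        J.Adj a b → (J.induce J.support).Reachable ⟨a, ha⟩ ⟨b, hb⟩ := by
      intro a b ha hb hab
      exact SimpleGraph.Adj.reachable (by simpa using hab)
    have key : ∀ x (hx : x ∈ J.support), (J.induce J.support).Reachable ⟨x, hx⟩ ⟨q, hqs⟩ := by
      intro x hx
      by_cases hxq : x = q
      · subst hxq; rfl
      by_cases hxv : x = v
      · obtain ⟨y, hy⟩ := (SimpleGraph.mem_support J).mp hx
        rw [hxv] at hy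
        have hKy : K.Adj v y := hNv y hy
        have hiy : K.Adj i y := hsub hKy
        have hyv : y ≠ v := hKy.ne'
        have hys : y ∈ J.support := (SimpleGraph.mem_support J).mpr ⟨v, hy.symm⟩
        refine (hstep _ _ hx hys (hxv ▸ hy)).trans ?_
        by_cases hyq : y = q
        · subst hyq; rfl
        · exact hstep _ _ hys hqs ((hhub y hyv hyq).symm)
      · exact hstep _ _ hx hqs ((hhub x hxv hxq).symm)
    rw [SimpleGraph.connected_iff_exists_forall_reachable]
    exact ⟨⟨q, hqs⟩, fun b => (key b.1 b.2).symm⟩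
  · -- chordality
    intro r w hc hlen
    by_cases hall : ∀ x ∈ w.support, K.Adj i x
    · set m := w.length with hm
      have inj := fun {j k : ℕ} (hj : j < m) (hk : k < m) (h : w.getVert j = w.getVert k) =>
        cycle_getVert_injOn hc hj hk h
      refine ⟨w.getVert 0, w.getVert 2, walk_getVert_mem_support w 0,
        walk_getVert_mem_support w 2, ?_, ?_⟩
      · refine hC _ _ (hall _ (walk_getVert_mem_support w 0))
          (hall _ (walk_getVert_mem_support w 2)) ?_
        intro h
        have := inj (by omega) (by omega) h
        omega
      · intro hmem
        obtain ⟨j, hj, h⟩ := walk_edge_index w hmem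
        rcases h with ⟨h1, h2⟩ | ⟨h1, h2⟩
        · have hj0 : j = 0 := inj hj (by omega) h1
          subst hj0
          have := inj (by omega : (1:ℕ) < m) (by omega : (2:ℕ) < m) h2
          omega
        · have hj2 : j = 2 := inj hj (by omega) h1
          subst hj2
          have := inj (by omega : (3:ℕ) < m) (by omega : (0:ℕ) < m) h2
          omega
    · push_neg at hall
      obtain ⟨x, hxs, hxS⟩ := hall
      set w' := w.rotate x hxs with hw'
      have hc' : w'.IsCycle := hc.rotate hxs
      have hlen' : w'.length = w.length := by
        have := (w.rotate_edges x hxs).perm.length_eq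
        rwa [Walk.length_edges, Walk.length_edges] at this
      set m := w'.length with hm
      have hm4 : 4 ≤ m := by omega
      have inj := fun {j k : ℕ} (hj : j < m) (hk : k < m) (h : w'.getVert j = w'.getVert k) =>
        cycle_getVert_injOn hc' hj hk h
      have hx0 : w'.getVert 0 = x := Walk.getVert_zero _
      have hxm : w'.getVert m = x := Walk.getVert_length _
      have hsupp : ∀ z, z ∈ w'.support → z ∈ w.support := by
        intro z hz
        rw [Walk.mem_support_iff] at hz
        rcases hz with rfl | hz
        · exact hxs
        · rw [Walk.support_eq_cons]
          exact List.mem_cons_of_mem _ ((w.support_rotate x hxs).mem_iff.mp hz)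
      have adj01 : J.Adj (w'.getVert 0) (w'.getVert 1) := w'.adj_getVert_succ (by omega)
      have adjlast : J.Adj (w'.getVert (m - 1)) (w'.getVert m) := by
        have := w'.adj_getVert_succ (i := m - 1) (by omega)
        have hmm : m - 1 + 1 = m := by omega
        rwa [hmm] at this
      have ha : K.Adj i (w'.getVert 1) := by
        rcases hA _ _ adj01 with h | h
        · rw [hx0] at h; exact absurd h hxS
        · exact h
      have hb : K.Adj i (w'.getVert (m - 1)) := by
        rcases hA _ _ adjlast with h | h
        · exact h
        · rw [hxm] at h; exact absurd h hxS
      have hab : w'.getVert 1 ≠ w'.getVert (m - 1) := by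
        intro h
        have := inj (by omega) (by omega) h
        omega
      refine ⟨w'.getVert 1, w'.getVert (m - 1),
        hsupp _ (walk_getVert_mem_support w' 1),
        hsupp _ (walk_getVert_mem_support w' (m - 1)),
        hC _ _ ha hb hab, ?_⟩
      intro hmem
      rw [← (w.rotate_edges x hxs).mem_iff] at hmem
      obtain ⟨j, hj, h⟩ := walk_edge_index w' hmem
      rw [← hm] at hj
      rcases h with ⟨h1, h2⟩ | ⟨h1, h2⟩
      · have hj1 : j = 1 := inj hj (by omega) h1
        subst hj1
        have := inj (by omega : (2:ℕ) < m) (by omega) h2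
        omega
      · have hj1 : j = m - 1 := inj hj (by omega) h1
        have : w'.getVert (j + 1) = w'.getVert 0 := by
          rw [hj1]
          have hmm : m - 1 + 1 = m := by omega
          rw [hmm, hxm, hx0]
        rw [h2] at this
        have := inj (by omega : (1:ℕ) < m) (by omega : (0:ℕ) < m) this
        omega
end

section
/- Let n ≥ 4, let S = K[t_1,...,t_n] be a polynomial ring over a field K, and let R = K[t_i t_j : 1 ≤ i < j ≤ n] ⊆ S be the second squarefree Veronese subring. For distinct indices i, j, l ∈ [n], the colon quotient of ideals of R satisfies (t_i t_j) : (t_i t_l) = ( t_p t_j : p ∈ [n], p ≠ l, p ≠ j ), where both sides are ideals of R. -/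
open MvPolynomial

/-- The second squarefree Veronese subring `K[tᵢtⱼ : i ≠ j]` of `K[t₁,…,tₙ]`. -/
noncomputable def sqfVer2 (𝕜 : Type*) [Field 𝕜] (n : ℕ) : Subalgebra 𝕜 (MvPolynomial (Fin n) 𝕜) :=
  Algebra.adjoin 𝕜 {m | ∃ i j : Fin n, i ≠ j ∧ m = X i * X j}

lemma mem_sqfVer2 {𝕜 : Type*} [Field 𝕜] {n : ℕ} {i j : Fin n} (h : i ≠ j) :
    (X i * X j : MvPolynomial (Fin n) 𝕜) ∈ sqfVer2 𝕜 n :=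
  Algebra.subset_adjoin ⟨i, j, h, rfl⟩

/-- The generator `tᵢtⱼ` as an element of the second squarefree Veronese subring. -/
noncomputable def vgen (𝕜 : Type*) [Field 𝕜] {n : ℕ} {i j : Fin n} (h : i ≠ j) :
    sqfVer2 𝕜 n :=
  ⟨X i * X j, mem_sqfVer2 h⟩

namespace SqfAux

variable {n : ℕ}

/-- Total degree of an exponent vector. -/
def deg (a : Fin n →₀ ℕ) : ℕ := ∑ p, a p

/-- The Veronese condition: even total degree, and no variable exceeds half the degree. -/
def Ver (a : Fin n →₀ ℕ) : Prop := Even (deg a) ∧ ∀ p, 2 * a p ≤ deg a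

/-- Exponent vectors of the quadratic squarefree generators. -/
def Vgens (n : ℕ) : Set (Fin n →₀ ℕ) :=
  {a | ∃ i j : Fin n, i ≠ j ∧ a = Finsupp.single i 1 + Finsupp.single j 1}

lemma deg_add (a b : Fin n →₀ ℕ) : deg (a + b) = deg a + deg b := by
  simp [deg, Finset.sum_add_distrib]

lemma deg_single (i : Fin n) : deg (Finsupp.single i (1 : ℕ)) = 1 := by
  simp [deg, Finsupp.single_apply]

lemma le_deg (a : Fin n →₀ ℕ) (p : Fin n) : a p ≤ deg a :=
  Finset.single_le_sum (fun q _ => Nat.zero_le (a q)) (Finset.mem_univ p)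

lemma pair_le (a : Fin n →₀ ℕ) {p q : Fin n} (h : p ≠ q) : a p + a q ≤ deg a := by
  classical
  have hs : ∑ r ∈ ({p, q} : Finset (Fin n)), a r ≤ deg a :=
    Finset.sum_le_sum_of_subset (Finset.subset_univ _)
  rwa [Finset.sum_pair h] at hs

lemma triple_le (a : Fin n →₀ ℕ) {p q r : Fin n} (hpq : p ≠ q) (hpr : p ≠ r) (hqr : q ≠ r) :
    a p + a q + a r ≤ deg a := by
  classical
  have hs : ∑ s ∈ ({p, q, r} : Finset (Fin n)), a s ≤ deg a :=
    Finset.sum_le_sum_of_subset (Finset.subset_univ _)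
  rw [Finset.sum_insert (by simp [hpq, hpr]), Finset.sum_pair hqr] at hs
  omega

lemma ver_zero : Ver (0 : Fin n →₀ ℕ) := by
  constructor <;> simp [deg]

lemma ver_add {a b : Fin n →₀ ℕ} (ha : Ver a) (hb : Ver b) : Ver (a + b) := by
  refine ⟨by rw [deg_add]; exact ha.1.add hb.1, fun p => ?_⟩
  have h1 := ha.2 p
  have h2 := hb.2 p
  rw [deg_add]
  simp only [Finsupp.add_apply]
  omega

lemma ver_gen {i j : Fin n} (hij : i ≠ j) :
    Ver (Finsupp.single i 1 + Finsupp.single j 1) := by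
  have hd : deg (Finsupp.single i (1 : ℕ) + Finsupp.single j 1) = 2 := by
    rw [deg_add, deg_single, deg_single]
  refine ⟨by rw [hd]; exact even_two, fun p => ?_⟩
  rw [hd]
  simp only [Finsupp.add_apply, Finsupp.single_apply]
  split_ifs with h1 h2 h3
  · exact absurd (h1.trans h2.symm) hij
  · omega
  · omega
  · omega

/-- Every exponent vector in the additive closure of the generators satisfies `Ver`. -/
lemma ver_of_mem_closure {a : Fin n →₀ ℕ} (h : a ∈ AddSubmonoid.closure (Vgens n)) :
    Ver a := by
  induction h using AddSubmonoid.closure_induction with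
  | mem x hx => obtain ⟨i, j, hij, rfl⟩ := hx; exact ver_gen hij
  | zero => exact ver_zero
  | add x y _ _ hx hy => exact ver_add hx hy

/-- Decomposition of an exponent vector with positive entries at two distinct indices. -/
lemma sub_decomp {a : Fin n →₀ ℕ} {j p : Fin n} (hjp : j ≠ p) (hj : 1 ≤ a j) (hp : 1 ≤ a p) :
    a = (a - Finsupp.single j 1 - Finsupp.single p 1) +
      (Finsupp.single p 1 + Finsupp.single j 1) := by
  ext r
  simp only [Finsupp.add_apply, Finsupp.tsub_apply, Finsupp.single_apply]
  by_cases h1 : j = r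
  · by_cases h2 : p = r
    · exact absurd (h1.trans h2.symm) hjp
    · subst h1
      rw [if_pos rfl, if_neg h2]
      omega
  · by_cases h2 : p = r
    · subst h2
      rw [if_neg h1, if_pos rfl]
      omega
    · rw [if_neg h1, if_neg h2]
      omega

/-- A multigraph-realization lemma: every vector with even degree `2k` and all entries `≤ k`
is a sum of generators. -/
lemma mem_closure_of_bounds : ∀ (k : ℕ) (a : Fin n →₀ ℕ), deg a = 2 * k → (∀ p, a p ≤ k) →
    a ∈ AddSubmonoid.closure (Vgens n)
  | 0, a, hd, hb => by
      have ha : a = 0 := by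
        ext p
        have h1 := hb p
        have h2 : (0 : Fin n →₀ ℕ) p = 0 := rfl
        omega
      rw [ha]
      exact zero_mem _
  | (k + 1), a, hd, hb => by
      classical
      have hne : (Finset.univ : Finset (Fin n)).Nonempty := by
        rcases Finset.eq_empty_or_nonempty (Finset.univ : Finset (Fin n)) with h | h
        · exfalso
          have : deg a = 0 := by simp [deg, h]
          omega
        · exact h
      obtain ⟨i, -, hi⟩ := Finset.exists_max_image Finset.univ a hne
      have hi' : ∀ p, a p ≤ a i := fun p => hi p (Finset.mem_univ p)
      have hq : ∃ q, q ≠ i ∧ 0 < a q := by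
        by_contra hcon
        push_neg at hcon
        have hsum : deg a = a i := by
          rw [deg, ← Finset.sum_subset (Finset.subset_univ ({i} : Finset (Fin n)))]
          · simp
          · intro x _ hx
            have hxi : x ≠ i := by simpa using hx
            have := hcon x hxi
            omega
        have := hb i
        omega
      obtain ⟨q, hqi, hq1⟩ := hq
      have hqe : q ∈ Finset.univ.erase i := Finset.mem_erase.mpr ⟨hqi, Finset.mem_univ q⟩
      obtain ⟨j, hjmem, hj⟩ := Finset.exists_max_image (Finset.univ.erase i) a ⟨q, hqe⟩
      have hji : j ≠ i := (Finset.mem_erase.mp hjmem).1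
      have haj : 1 ≤ a j := le_trans hq1 (hj q hqe)
      have hai : 1 ≤ a i := le_trans haj (hi' j)
      have hdecomp := sub_decomp (Ne.symm hji) hai haj
      set b := a - Finsupp.single i 1 - Finsupp.single j 1 with hbdef
      have hbp : ∀ p, b p = a p - (Finsupp.single i (1:ℕ)) p - (Finsupp.single j (1:ℕ)) p := by
        intro p
        rw [hbdef, Finsupp.tsub_apply, Finsupp.tsub_apply]
      have hdb : deg b = 2 * k := by
        have h5 := congrArg deg hdecomp
        rw [deg_add, deg_add, deg_single, deg_single, hd] at h5
        omega
      have hbb : ∀ p, b p ≤ k := by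
        intro p
        have hbpv := hbp p
        simp only [Finsupp.single_apply] at hbpv
        by_cases h1 : i = p
        · have h2 : ¬ (j = p) := fun hh => hji (hh.trans h1.symm)
          rw [if_pos h1, if_neg h2] at hbpv
          have := hb p
          omega
        · by_cases h2 : j = p
          · rw [if_neg h1, if_pos h2] at hbpv
            have := hb p
            omega
          · rw [if_neg h1, if_neg h2] at hbpv
            by_contra hcp
            push_neg at hcp
            have hpj : a p ≤ a j :=
              hj p (Finset.mem_erase.mpr ⟨fun hh => h1 hh.symm, Finset.mem_univ p⟩)
            have hji' : a j ≤ a i := hi' j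
            have htr : a i + a j + a p ≤ deg a :=
              triple_le a (Ne.symm hji) (fun hh => h1 hh) (fun hh => h2 hh)
            omega
      have hbmem := mem_closure_of_bounds k b hdb hbb
      rw [hdecomp]
      exact add_mem hbmem (AddSubmonoid.subset_closure ⟨j, i, hji, by rw [add_comm]⟩)

lemma mem_closure_of_ver {a : Fin n →₀ ℕ} (h : Ver a) :
    a ∈ AddSubmonoid.closure (Vgens n) := by
  obtain ⟨k, hk⟩ := h.1
  have hd : deg a = 2 * k := by omega
  exact mem_closure_of_bounds k a hd (fun p => by have := h.2 p; omega)

/-- `Ver` is preserved by removing one generator, under smallness hypotheses. -/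
lemma ver_sub {a : Fin n →₀ ℕ} {j p : Fin n} (hpj : p ≠ j) (haj : 1 ≤ a j) (hap : 1 ≤ a p)
    {k : ℕ} (hk1 : 1 ≤ k) (hdeg : deg a = 2 * k) (hjk : a j ≤ k) (hpk : a p ≤ k)
    (hsmall : ∀ r, r ≠ j → r ≠ p → a r ≤ k - 1) :
    Ver (a - Finsupp.single j 1 - Finsupp.single p 1) := by
  have hdecomp := sub_decomp (Ne.symm hpj) haj hap
  set b := a - Finsupp.single j 1 - Finsupp.single p 1 with hbdef
  have hbp : ∀ r, b r = a r - (Finsupp.single j (1:ℕ)) r - (Finsupp.single p (1:ℕ)) r := by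
    intro r
    rw [hbdef, Finsupp.tsub_apply, Finsupp.tsub_apply]
  have hdb : deg b = 2 * (k - 1) := by
    have h5 := congrArg deg hdecomp
    rw [deg_add, deg_add, deg_single, deg_single, hdeg] at h5
    omega
  refine ⟨⟨k - 1, by omega⟩, fun r => ?_⟩
  rw [hdb]
  have hbr := hbp r
  simp only [Finsupp.single_apply] at hbr
  by_cases h1 : j = r
  · have h2 : ¬ (p = r) := fun hh => hpj (hh.trans h1.symm)
    rw [if_pos h1, if_neg h2] at hbr
    have : a r ≤ k := h1 ▸ hjk
    omega
  · by_cases h2 : p = r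
    · rw [if_neg h1, if_pos h2] at hbr
      have : a r ≤ k := h2 ▸ hpk
      omega
    · rw [if_neg h1, if_neg h2] at hbr
      have := hsmall r (fun hh => h1 hh.symm) (fun hh => h2 hh.symm)
      omega

/-- The key combinatorial lemma. -/
lemma key {a : Fin n →₀ ℕ} {j l : Fin n} (hjl : j ≠ l) (hV : Ver a) (haj : 1 ≤ a j)
    (hV' : Ver (a + Finsupp.single l 1 - Finsupp.single j 1)) :
    ∃ p, p ≠ j ∧ p ≠ l ∧ 1 ≤ a p ∧
      Ver (a - Finsupp.single j 1 - Finsupp.single p 1) := by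
  classical
  obtain ⟨k, hk⟩ := hV.1
  have hdeg : deg a = 2 * k := by omega
  have hb : ∀ p, a p ≤ k := fun p => by have := hV.2 p; omega
  have hk1 : 1 ≤ k := by have := le_deg a j; omega
  -- facts about c := a + single l 1 - single j 1
  set c := a + Finsupp.single l 1 - Finsupp.single j 1 with hcdef
  have hcp : ∀ p, c p = a p + (Finsupp.single l (1:ℕ)) p - (Finsupp.single j (1:ℕ)) p := by
    intro p
    rw [hcdef, Finsupp.tsub_apply, Finsupp.add_apply]
  have hcj : c + Finsupp.single j 1 = a + Finsupp.single l 1 := by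
    ext r
    simp only [Finsupp.add_apply]
    rw [hcp r]
    simp only [Finsupp.single_apply]
    by_cases h1 : l = r
    · have h2 : ¬ (j = r) := fun hh => hjl (hh.trans h1.symm)
      rw [if_pos h1, if_neg h2]
      omega
    · by_cases h2 : j = r
      · rw [if_neg h1, if_pos h2]
        have : 1 ≤ a r := h2 ▸ haj
        omega
      · rw [if_neg h1, if_neg h2]
        omega
  have hdc : deg c = 2 * k := by
    have h5 := congrArg deg hcj
    rw [deg_add, deg_add, deg_single, deg_single, hdeg] at h5
    omega
  have hcl : c l = a l + 1 := by
    have h6 := hcp l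
    rw [Finsupp.single_eq_same, Finsupp.single_eq_of_ne' hjl] at h6
    omega
  have hal : a l + 1 ≤ k := by
    have h7 := hV'.2 l
    rw [hcl, hdc] at h7
    omega
  by_cases hex : ∃ q, q ≠ j ∧ a q = k
  · obtain ⟨q, hqj, hqk⟩ := hex
    have hql : q ≠ l := by
      intro hq
      rw [hq] at hqk
      omega
    have haq : 1 ≤ a q := by omega
    refine ⟨q, hqj, hql, haq, ?_⟩
    refine ver_sub hqj haj haq hk1 hdeg (hb j) (hb q) ?_
    intro r hrj hrq
    by_contra hcp'
    push_neg at hcp'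
    have htr : a r + a j + a q ≤ deg a :=
      triple_le a hrj hrq (fun hh => hqj hh.symm)
    omega
  · push_neg at hex
    have hb' : ∀ q, q ≠ j → a q ≤ k - 1 := by
      intro q hq
      have h8 := hb q
      have h9 := hex q hq
      omega
    have hp : ∃ p, p ≠ j ∧ p ≠ l ∧ 1 ≤ a p := by
      by_contra hcon
      push_neg at hcon
      have hsum : deg a = a j + a l := by
        rw [deg, ← Finset.sum_subset (Finset.subset_univ ({j, l} : Finset (Fin n)))]
        · rw [Finset.sum_pair hjl]
        · intro y _ hy
          simp only [Finset.mem_insert, Finset.mem_singleton, not_or] at hy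
          have := hcon y hy.1 hy.2
          omega
      have := hb j
      omega
    obtain ⟨p, hpj, hpl, hap⟩ := hp
    refine ⟨p, hpj, hpl, hap, ?_⟩
    refine ver_sub hpj haj hap hk1 hdeg (hb j) (hb p) ?_
    intro r hrj _
    exact hb' r hrj

variable {𝕜 : Type*} [Field 𝕜]

lemma monomial_one_mem_closure {a : Fin n →₀ ℕ}
    (hcl : a ∈ AddSubmonoid.closure (Vgens n)) :
    (monomial a (1 : 𝕜)) ∈ sqfVer2 𝕜 n := by
  induction hcl using AddSubmonoid.closure_induction with
  | mem x hx =>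
      obtain ⟨i, j, hij, rfl⟩ := hx
      have hXX : (monomial (Finsupp.single i 1 + Finsupp.single j 1) (1 : 𝕜)) = X i * X j := by
        rw [X, X, monomial_mul, one_mul]
      rw [hXX]
      exact mem_sqfVer2 hij
  | zero =>
      have h1 : (monomial (0 : Fin n →₀ ℕ) (1 : 𝕜)) = 1 := by
        simp
      rw [h1]
      exact one_mem _
  | add x y _ _ hx hy =>
      have hm : (monomial (x + y) (1 : 𝕜)) = monomial x 1 * monomial y 1 := by
        rw [monomial_mul, one_mul]
      rw [hm]
      exact mul_mem hx hy

lemma monomial_one_mem {a : Fin n →₀ ℕ} (h : Ver a) :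
    (monomial a (1 : 𝕜)) ∈ sqfVer2 𝕜 n :=
  monomial_one_mem_closure (mem_closure_of_ver h)

lemma monomial_mem {a : Fin n →₀ ℕ} (c : 𝕜) (h : Ver a) :
    (monomial a c) ∈ sqfVer2 𝕜 n := by
  have hc : (monomial a c : MvPolynomial (Fin n) 𝕜) = C c * monomial a 1 := by
    rw [C_mul_monomial, mul_one]
  rw [hc]
  exact mul_mem ((sqfVer2 𝕜 n).algebraMap_mem c) (monomial_one_mem h)

lemma ver_of_mem_support {x : MvPolynomial (Fin n) 𝕜} (hx : x ∈ sqfVer2 𝕜 n) :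
    ∀ a ∈ x.support, Ver a := by
  classical
  have hx' : x ∈ Algebra.adjoin 𝕜 {m : MvPolynomial (Fin n) 𝕜 |
      ∃ i j : Fin n, i ≠ j ∧ m = X i * X j} := hx
  clear hx
  induction hx' using Algebra.adjoin_induction with
  | mem x hx =>
      obtain ⟨i, j, hij, rfl⟩ := hx
      intro a ha
      have hXX : (X i * X j : MvPolynomial (Fin n) 𝕜) =
          monomial (Finsupp.single i 1 + Finsupp.single j 1) 1 := by
        rw [X, X, monomial_mul, one_mul]
      rw [hXX] at ha
      have h2 := support_monomial_subset ha
      simp only [Finset.mem_singleton] at h2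
      rw [h2]
      exact ver_gen hij
  | algebraMap r =>
      intro a ha
      have hC : (algebraMap 𝕜 (MvPolynomial (Fin n) 𝕜) r) = monomial 0 r := by
        rw [algebraMap_eq, C_apply]
      rw [hC] at ha
      have h2 := support_monomial_subset ha
      simp only [Finset.mem_singleton] at h2
      rw [h2]
      exact ver_zero
  | add x y _ _ hx hy =>
      intro a ha
      rcases Finset.mem_union.mp (Finsupp.support_add ha) with h | h
      · exact hx a h
      · exact hy a h
  | mul x y _ _ hx hy =>
      intro a ha
      have h2 := support_mul x y ha
      rw [Finset.mem_add] at h2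
      obtain ⟨b, hb, c, hc, rfl⟩ := h2
      exact ver_add (hx b hb) (hy c hc)

end SqfAux

open SqfAux

set_option synthInstance.maxHeartbeats 1000000 in
theorem stmt6 (𝕜 : Type*) [Field 𝕜] {n : ℕ} (hn : 4 ≤ n) (i j l : Fin n)
    (hij : i ≠ j) (hil : i ≠ l) (hjl : j ≠ l) :
    (Ideal.span {vgen 𝕜 hij}).colon (Ideal.span {vgen 𝕜 hil}) =
      Ideal.span {g : sqfVer2 𝕜 n | ∃ p : Fin n, ∃ hpj : p ≠ j, p ≠ l ∧ g = vgen 𝕜 hpj} := by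
  classical
  apply le_antisymm
  · intro x hx
    rw [Ideal.mem_colon_span_singleton] at hx
    obtain ⟨h, hh⟩ := Ideal.mem_span_singleton'.mp hx
    have hhS : (h : MvPolynomial (Fin n) 𝕜) * (X i * X j) =
        (x : MvPolynomial (Fin n) 𝕜) * (X i * X l) := by
      have := congrArg Subtype.val hh
      simpa [vgen] using this
    have hcan : (h : MvPolynomial (Fin n) 𝕜) * X j = (x : MvPolynomial (Fin n) 𝕜) * X l := by
      have hXi : (X i : MvPolynomial (Fin n) 𝕜) ≠ 0 := X_ne_zero i
      apply mul_left_cancel₀ hXi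
      linear_combination hhS
    have hxver := ver_of_mem_support x.2
    have hhver := ver_of_mem_support h.2
    -- key fact for each monomial of x
    have hmono : ∀ (a : Fin n →₀ ℕ) (ha : a ∈ (x : MvPolynomial (Fin n) 𝕜).support),
        (⟨monomial a ((x : MvPolynomial (Fin n) 𝕜).coeff a),
            monomial_mem _ (hxver a ha)⟩ : sqfVer2 𝕜 n) ∈
          Ideal.span {g : sqfVer2 𝕜 n | ∃ p : Fin n, ∃ hpj : p ≠ j, p ≠ l ∧ g = vgen 𝕜 hpj} := by
      intro a ha
      have hVa : Ver a := hxver a ha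
      have hc0 : (x : MvPolynomial (Fin n) 𝕜).coeff a ≠ 0 := mem_support_iff.mp ha
      have h1 : coeff (a + Finsupp.single l 1) ((x : MvPolynomial (Fin n) 𝕜) * X l) =
          (x : MvPolynomial (Fin n) 𝕜).coeff a := coeff_mul_X a l _
      have h2 : coeff (a + Finsupp.single l 1) ((h : MvPolynomial (Fin n) 𝕜) * X j) ≠ 0 := by
        rw [hcan, h1]; exact hc0
      rw [coeff_mul_X'] at h2
      split at h2
      case isFalse => exact absurd rfl h2
      case isTrue hjs =>
        have haj : 1 ≤ a j := by
          rw [Finsupp.mem_support_iff, Finsupp.add_apply, Finsupp.single_apply,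
            if_neg (Ne.symm hjl)] at hjs
          omega
        have hVb : Ver (a + Finsupp.single l 1 - Finsupp.single j 1) :=
          hhver _ (mem_support_iff.mpr h2)
        obtain ⟨p, hpj, hpl, hap, hVq⟩ := key hjl hVa haj hVb
        have hdec := sub_decomp (Ne.symm hpj) haj hap
        have heq : (⟨monomial a ((x : MvPolynomial (Fin n) 𝕜).coeff a),
              monomial_mem _ (hxver a ha)⟩ : sqfVer2 𝕜 n) =
            (⟨monomial (a - Finsupp.single j 1 - Finsupp.single p 1)
                ((x : MvPolynomial (Fin n) 𝕜).coeff a), monomial_mem _ hVq⟩ :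
              sqfVer2 𝕜 n) * vgen 𝕜 hpj := by
          apply Subtype.ext
          show monomial a _ = monomial (a - Finsupp.single j 1 - Finsupp.single p 1) _ *
            (X p * X j)
          rw [show (X p : MvPolynomial (Fin n) 𝕜) * X j =
              monomial (Finsupp.single p 1 + Finsupp.single j 1) 1 by
            rw [X, X, monomial_mul, one_mul]]
          rw [monomial_mul, mul_one, ← hdec]
        rw [heq]
        exact Ideal.mul_mem_left _ _ (Ideal.subset_span ⟨p, hpj, hpl, rfl⟩)
    -- write x as a sum of its monomials, inside the subalgebra
    have hxsum : x = ∑ a ∈ (x : MvPolynomial (Fin n) 𝕜).support.attach,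
        (⟨monomial a.1 ((x : MvPolynomial (Fin n) 𝕜).coeff a.1),
          monomial_mem _ (hxver a.1 a.2)⟩ : sqfVer2 𝕜 n) := by
      apply Subtype.ext
      rw [AddSubmonoidClass.coe_finset_sum]
      simp only
      rw [Finset.sum_attach _ (fun a => monomial a ((x : MvPolynomial (Fin n) 𝕜).coeff a))]
      exact as_sum _
    rw [hxsum]
    apply Ideal.sum_mem
    intro a _
    exact hmono a.1 a.2
  · rw [Ideal.span_le]
    rintro g ⟨p, hpj, hpl, rfl⟩
    rw [SetLike.mem_coe, Ideal.mem_colon_span_singleton]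
    apply Ideal.mem_span_singleton'.mpr
    refine ⟨⟨X p * X l, mem_sqfVer2 hpl⟩, ?_⟩
    apply Subtype.ext
    show (X p * X l) * (X i * X j) = (X p * X j) * (X i * X l)
    ring
end

section
/- Let n ≥ 5, let S = K[t_1,...,t_n] and let R = K[t_i t_j : 1 ≤ i < j ≤ n] be the second squarefree Veronese subring. For pairwise distinct indices i, j, k, l ∈ [n], the colon ideal in R satisfies (t_i t_j) : (t_k t_l) = ( t_i t_j ) + ( t_i t_p · t_j t_p : p ∈ [n] \ {i, j, k, l} ). -/
open MvPolynomial

/-- A monomial exponent is *good* if its total degree is even and no variable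
exceeds half the total degree; these are exactly the monomials of the second
squarefree Veronese. -/
def Good {n : ℕ} (a : Fin n →₀ ℕ) : Prop :=
  Even (∑ m, a m) ∧ ∀ m, 2 * a m ≤ ∑ m, a m

lemma good_zero {n : ℕ} : Good (0 : Fin n →₀ ℕ) := by
  constructor <;> simp

lemma good_add {n : ℕ} {a b : Fin n →₀ ℕ} (ha : Good a) (hb : Good b) : Good (a + b) := by
  obtain ⟨ha1, ha2⟩ := ha
  obtain ⟨hb1, hb2⟩ := hb
  constructor
  · simpa [Finset.sum_add_distrib] using ha1.add hb1
  · intro m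
    have := ha2 m
    have := hb2 m
    simp only [Finsupp.add_apply, Finset.sum_add_distrib]
    omega

lemma X_mul_X_eq {𝕜 : Type*} [Field 𝕜] {n : ℕ} (i j : Fin n) :
    (X i * X j : MvPolynomial (Fin n) 𝕜)
      = monomial (Finsupp.single i 1 + Finsupp.single j 1) 1 := by
  rw [X, X, monomial_mul, one_mul]

lemma good_pair {n : ℕ} {i j : Fin n} (h : i ≠ j) :
    Good (Finsupp.single i 1 + Finsupp.single j 1) := by
  have hsum : ∑ m, (Finsupp.single i 1 + Finsupp.single j 1 : Fin n →₀ ℕ) m = 2 := by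
    simp only [Finsupp.add_apply, Finset.sum_add_distrib, Finsupp.single_apply]
    rw [Finset.sum_ite_eq Finset.univ i, Finset.sum_ite_eq Finset.univ j]
    simp
  constructor
  · rw [hsum]; exact even_two
  · intro m
    rw [hsum]
    simp only [Finsupp.add_apply, Finsupp.single_apply]
    by_cases hi : i = m <;> by_cases hj : j = m <;> simp_all

/-- The subalgebra of polynomials all of whose monomials are good. -/
def goodAlg (𝕜 : Type*) [Field 𝕜] (n : ℕ) : Subalgebra 𝕜 (MvPolynomial (Fin n) 𝕜) where
  carrier := {g | ∀ a ∈ g.support, Good a}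
  add_mem' {p q} hp hq := fun a ha => by
    rcases Finset.mem_union.mp (MvPolynomial.support_add ha) with h | h
    · exact hp a h
    · exact hq a h
  mul_mem' {p q} hp hq := fun a ha => by
    classical
    rcases Finset.mem_add.mp (MvPolynomial.support_mul p q ha) with ⟨b, hb, c, hc, rfl⟩
    exact good_add (hp b hb) (hq c hc)
  one_mem' := fun a ha => by
    classical
    have : a = 0 := by
      by_contra h
      simp [MvPolynomial.mem_support_iff, MvPolynomial.coeff_one, eq_comm, h] at ha
    subst this; exact good_zero
  zero_mem' := by simp
  algebraMap_mem' r := fun a ha => by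
    classical
    have : a = 0 := by
      by_contra h
      simp [MvPolynomial.mem_support_iff, MvPolynomial.coeff_C, Ne.symm h] at ha
    subst this; exact good_zero

lemma sqfVer2_le_goodAlg {𝕜 : Type*} [Field 𝕜] {n : ℕ} : sqfVer2 𝕜 n ≤ goodAlg 𝕜 n := by
  apply Algebra.adjoin_le
  rintro m ⟨i, j, hij, rfl⟩
  intro a ha
  rw [X_mul_X_eq] at ha
  classical
  have := MvPolynomial.support_monomial_subset ha
  simp only [Finset.mem_singleton] at this
  subst this
  exact good_pair hij

lemma sum_pair {n : ℕ} (i j : Fin n) :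
    ∑ m, (Finsupp.single i 1 + Finsupp.single j 1 : Fin n →₀ ℕ) m = 2 := by
  simp only [Finsupp.add_apply, Finset.sum_add_distrib, Finsupp.single_apply]
  rw [Finset.sum_ite_eq Finset.univ i, Finset.sum_ite_eq Finset.univ j]
  simp

lemma mem_of_good {𝕜 : Type*} [Field 𝕜] {n : ℕ} :
    ∀ N (a : Fin n →₀ ℕ), (∑ m, a m) = N → Good a →
      (monomial a 1 : MvPolynomial (Fin n) 𝕜) ∈ sqfVer2 𝕜 n := by
  intro N
  induction N using Nat.strong_induction_on with
  | _ N ih =>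
    intro a hN hg
    obtain ⟨hev, hcoord⟩ := hg
    rw [hN] at hev hcoord
    rcases Nat.eq_zero_or_pos N with rfl | hpos
    · have ha0 : a = 0 := by
        ext m
        exact Finset.sum_eq_zero_iff.mp hN m (Finset.mem_univ m)
      subst ha0
      simpa [monomial_zero'] using (sqfVer2 𝕜 n).one_mem
    · -- pick `m` maximizing `a`
      have hne : (Finset.univ : Finset (Fin n)).Nonempty := by
        rcases Finset.exists_ne_zero_of_sum_ne_zero (by omega : ∑ m, a m ≠ 0)
          with ⟨q, hq, -⟩
        exact ⟨q, hq⟩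
      obtain ⟨m, -, hm⟩ := Finset.exists_max_image Finset.univ a hne
      have ham1 : 1 ≤ a m := by
        rcases Finset.exists_ne_zero_of_sum_ne_zero (by omega : ∑ m, a m ≠ 0)
          with ⟨q, -, hq⟩
        exact le_trans (by omega) (hm q (Finset.mem_univ q))
      have herase : a m + ∑ q ∈ Finset.univ.erase m, a q = N := by
        rw [Finset.add_sum_erase _ a (Finset.mem_univ m)]; exact hN
      have hEpos : ∑ q ∈ Finset.univ.erase m, a q ≠ 0 := by
        have := hcoord m; omega
      obtain ⟨q0, hq0mem, hq0⟩ := Finset.exists_ne_zero_of_sum_ne_zero hEpos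
      obtain ⟨m', hm'mem, hm'⟩ :=
        Finset.exists_max_image (Finset.univ.erase m) a ⟨q0, hq0mem⟩
      have hmm' : m ≠ m' := (Finset.ne_of_mem_erase hm'mem).symm
      have ham'1 : 1 ≤ a m' := le_trans (by omega) (hm' q0 hq0mem)
      have ham'm : a m' ≤ a m := hm m' (Finset.mem_univ m')
      set u : Fin n →₀ ℕ := Finsupp.single m 1 + Finsupp.single m' 1 with hu
      have hle : u ≤ a := by
        rw [Finsupp.le_def]
        intro q
        simp only [hu, Finsupp.add_apply, Finsupp.single_apply]
        by_cases h1 : m = q <;> by_cases h2 : m' = q <;> simp_all <;> omega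
      set a' : Fin n →₀ ℕ := a - u with ha'def
      have ha' : a' + u = a := tsub_add_cancel_of_le hle
      have hsumu : ∑ q, u q = 2 := sum_pair m m'
      have hsuma' : ∑ q, a' q = N - 2 := by
        have : (∑ q, a' q) + (∑ q, u q) = N := by
          rw [← Finset.sum_add_distrib]
          simp only [← Finsupp.add_apply]
          rw [ha', hN]
        omega
      have hN2 : 2 ≤ N := by
        rcases hev with ⟨c, hc⟩; omega
      have ha'app : ∀ q, a' q = a q - u q := fun q => rfl
      have huapp : ∀ q, u q = (if m = q then 1 else 0) + (if m' = q then 1 else 0) := by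
        intro q; simp [hu, Finsupp.single_apply]
      have hgood' : Good a' := by
        constructor
        · rw [hsuma']
          rcases hev with ⟨c, hc⟩
          exact ⟨c - 1, by omega⟩
        · intro q
          rw [hsuma', ha'app q, huapp q]
          by_cases h1 : m = q
          · subst h1
            have := hcoord m
            simp [hmm']
            omega
          · by_cases h2 : m' = q
            · subst h2
              have := hcoord m'
              simp [h1]
              omega
            · -- q distinct from m, m'
              have haqm' : a q ≤ a m' := hm' q (Finset.mem_erase.mpr ⟨fun h => h1 h.symm, Finset.mem_univ q⟩)
              have h3 : a m + a m' + a q ≤ N := by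
                have hsub : ({m, m', q} : Finset (Fin n)) ⊆ Finset.univ := Finset.subset_univ _
                have : ∑ x ∈ ({m, m', q} : Finset (Fin n)), a x ≤ ∑ x, a x :=
                  Finset.sum_le_sum_of_subset hsub
                rw [Finset.sum_insert (by simp [hmm', h1]),
                    Finset.sum_insert (by simp [h2]), Finset.sum_singleton] at this
                omega
              rcases hev with ⟨c, hc⟩
              simp [h1, h2]
              omega
      have hmon : (monomial a 1 : MvPolynomial (Fin n) 𝕜)
          = monomial a' 1 * (X m * X m') := by
        rw [X_mul_X_eq, monomial_mul, one_mul, ← hu, ha']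
      rw [hmon]
      exact mul_mem (ih (N - 2) (by omega) a' hsuma' hgood') (mem_sqfVer2 hmm')

lemma key_lemma {n : ℕ} {i j k l : Fin n}
    (hik : i ≠ k) (hil : i ≠ l) (hjk : j ≠ k) (hjl : j ≠ l)
    (a : Fin n →₀ ℕ)
    (h1 : Good (a + (Finsupp.single i 1 + Finsupp.single j 1)))
    (h2 : Good (a + (Finsupp.single k 1 + Finsupp.single l 1))) :
    Good a ∨ ∃ p : Fin n, p ≠ i ∧ p ≠ j ∧ p ≠ k ∧ p ≠ l ∧
      Finsupp.single p 2 ≤ a ∧ Good (a - Finsupp.single p 2) := by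
  classical
  set D := ∑ m, a m with hD
  have hsum1 : ∑ m, (a + (Finsupp.single i 1 + Finsupp.single j 1) : Fin n →₀ ℕ) m = D + 2 := by
    simp only [Finsupp.add_apply, Finset.sum_add_distrib, ← hD]
    have := sum_pair i j
    simp only [Finsupp.add_apply, Finset.sum_add_distrib] at this
    omega
  have hsum2 : ∑ m, (a + (Finsupp.single k 1 + Finsupp.single l 1) : Fin n →₀ ℕ) m = D + 2 := by
    simp only [Finsupp.add_apply, Finset.sum_add_distrib, ← hD]
    have := sum_pair k l
    simp only [Finsupp.add_apply, Finset.sum_add_distrib] at this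
    omega
  obtain ⟨he1, hc1⟩ := h1
  obtain ⟨he2, hc2⟩ := h2
  rw [hsum1] at he1 hc1
  rw [hsum2] at hc2
  have hev : Even D := by rcases he1 with ⟨c, hc⟩; exact ⟨c - 1, by omega⟩
  by_cases hgood : ∀ m, 2 * a m ≤ D
  · exact Or.inl ⟨hev, hgood⟩
  · push_neg at hgood
    obtain ⟨p, hp⟩ := hgood
    right
    obtain ⟨c, hc⟩ := hev
    have hc1p := hc1 p
    have hc2p := hc2 p
    simp only [Finsupp.add_apply, Finsupp.single_apply] at hc1p hc2p
    have hpi : p ≠ i := by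
      intro h; subst h; simp at hc1p; omega
    have hpj : p ≠ j := by
      intro h; subst h; simp [Ne.symm hpi] at hc1p; omega
    have hpk : p ≠ k := by
      intro h; subst h; simp at hc2p; omega
    have hpl : p ≠ l := by
      intro h; subst h; simp [Ne.symm hpk] at hc2p; omega
    simp only [Ne.symm hpi, Ne.symm hpj, Ne.symm hpk, Ne.symm hpl, if_false] at hc1p hc2p
    -- now 2 * a p ≤ D + 2 and 2 * a p > D, D = c + c, so a p = c + 1
    have hap : a p = c + 1 := by omega
    -- D ≥ a p
    have hDap : a p ≤ D := by
      have hsub : ({p} : Finset (Fin n)) ⊆ Finset.univ := Finset.subset_univ _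
      have := Finset.sum_le_sum_of_subset (f := fun q => a q) hsub
      rw [Finset.sum_singleton] at this
      rw [hD]
      simpa using this
    have hc1' : 1 ≤ c := by omega
    have hple : Finsupp.single p 2 ≤ a := by
      rw [Finsupp.single_le_iff]
      omega
    refine ⟨p, hpi, hpj, hpk, hpl, hple, ?_⟩
    set b := a - Finsupp.single p 2 with hb
    have hba : b + Finsupp.single p 2 = a := tsub_add_cancel_of_le hple
    have hsumb : ∑ m, b m = D - 2 := by
      have h2' : ∑ m, (Finsupp.single p 2 : Fin n →₀ ℕ) m = 2 := by
        simp [Finsupp.single_apply, Finset.sum_ite_eq]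
      have : (∑ m, b m) + 2 = D := by
        rw [← h2', ← Finset.sum_add_distrib]
        simp only [← Finsupp.add_apply, hba, hD]
      omega
    constructor
    · rw [hsumb]; exact ⟨c - 1, by omega⟩
    · intro q
      rw [hsumb]
      have hbq : b q = a q - (if p = q then 2 else 0) := by
        simp [hb, Finsupp.single_apply]
      by_cases hq : p = q
      · subst hq
        simp only [eq_self_iff_true, if_true] at hbq
        omega
      · -- a q + a p ≤ D
        have hsub : ({p, q} : Finset (Fin n)) ⊆ Finset.univ := Finset.subset_univ _
        have hs := Finset.sum_le_sum_of_subset (f := fun q => a q) hsub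
        rw [Finset.sum_insert (by simp [hq]), Finset.sum_singleton] at hs
        rw [← hD] at hs
        simp only [if_neg hq] at hbq
        omega

lemma monomial_mem_of_good {𝕜 : Type*} [Field 𝕜] {n : ℕ} {a : Fin n →₀ ℕ}
    (h : Good a) (c : 𝕜) : (monomial a c : MvPolynomial (Fin n) 𝕜) ∈ sqfVer2 𝕜 n := by
  have h1 := mem_of_good (𝕜 := 𝕜) (∑ m, a m) a rfl h
  have := (sqfVer2 𝕜 n).smul_mem h1 c
  rwa [smul_monomial, smul_eq_mul, mul_one] at this

lemma pair_le_iff {n : ℕ} {i j : Fin n} (hij : i ≠ j) (b : Fin n →₀ ℕ) :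
    Finsupp.single i 1 + Finsupp.single j 1 ≤ b ↔ 1 ≤ b i ∧ 1 ≤ b j := by
  rw [Finsupp.le_def]
  constructor
  · intro h
    constructor
    · have := h i
      simp [Finsupp.single_apply, Ne.symm hij] at this
      omega
    · have := h j
      simp [Finsupp.single_apply, hij] at this
      omega
  · rintro ⟨h1, h2⟩ q
    simp only [Finsupp.add_apply, Finsupp.single_apply]
    by_cases hq1 : i = q <;> by_cases hq2 : j = q <;> simp_all <;> omega

set_option synthInstance.maxHeartbeats 1000000 in
set_option maxHeartbeats 2000000 in
theorem stmt7 (𝕜 : Type*) [Field 𝕜] {n : ℕ} (hn : 5 ≤ n) (i j k l : Fin n)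
    (hij : i ≠ j) (hik : i ≠ k) (hil : i ≠ l) (hjk : j ≠ k) (hjl : j ≠ l) (hkl : k ≠ l) :
    (Ideal.span {vgen 𝕜 hij}).colon (Ideal.span {vgen 𝕜 hkl}) =
      Ideal.span ({vgen 𝕜 hij} ∪
        {g : sqfVer2 𝕜 n | ∃ p : Fin n, ∃ hip : i ≠ p, ∃ hjp : j ≠ p,
          p ≠ k ∧ p ≠ l ∧ g = vgen 𝕜 hip * vgen 𝕜 hjp}) := by
  classical
  apply le_antisymm
  · -- hard direction
    intro g hg
    rw [Ideal.mem_colon_span_singleton, Ideal.mem_span_singleton] at hg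
    obtain ⟨r, hr⟩ := hg
    have hS : (g : MvPolynomial (Fin n) 𝕜) * (X k * X l) = (X i * X j) * (r : MvPolynomial (Fin n) 𝕜) := by
      have := congrArg Subtype.val hr
      simpa [vgen] using this
    set uij : Fin n →₀ ℕ := Finsupp.single i 1 + Finsupp.single j 1 with huij
    set ukl : Fin n →₀ ℕ := Finsupp.single k 1 + Finsupp.single l 1 with hukl
    have hukli : ukl i = 0 := by
      simp [hukl, Finsupp.single_apply, Ne.symm hik, Ne.symm hil]
    have huklj : ukl j = 0 := by
      simp [hukl, Finsupp.single_apply, Ne.symm hjk, Ne.symm hjl]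
    -- every monomial of g is divisible by t_i t_j
    have hzero : ∀ b : Fin n →₀ ℕ, ¬ uij ≤ b →
        coeff b (g : MvPolynomial (Fin n) 𝕜) = 0 := by
      intro b hb
      have h1 : coeff (b + ukl) ((g : MvPolynomial (Fin n) 𝕜) * (X k * X l))
          = coeff b (g : MvPolynomial (Fin n) 𝕜) := by
        rw [show (X k * X l : MvPolynomial (Fin n) 𝕜) = monomial ukl 1 from X_mul_X_eq k l,
          coeff_mul_monomial, mul_one]
      have h2 : coeff (b + ukl) ((X i * X j : MvPolynomial (Fin n) 𝕜) * (r : MvPolynomial (Fin n) 𝕜)) = 0 := by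
        rw [show (X i * X j : MvPolynomial (Fin n) 𝕜) = monomial uij 1 from X_mul_X_eq i j,
          coeff_monomial_mul', if_neg]
        intro hle
        apply hb
        rw [huij, pair_le_iff hij] at hle ⊢
        simp only [Finsupp.add_apply, hukli, huklj, add_zero] at hle
        exact hle
      rw [← h1, hS, h2]
    set q : MvPolynomial (Fin n) 𝕜 := MvPolynomial.divMonomial (g : MvPolynomial (Fin n) 𝕜) uij with hqdef
    have hmod : MvPolynomial.modMonomial (g : MvPolynomial (Fin n) 𝕜) uij = 0 := by
      rw [MvPolynomial.eq_zero_iff]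
      intro d
      by_cases hd : uij ≤ d
      · exact coeff_modMonomial_of_le _ hd
      · rw [coeff_modMonomial_of_not_le _ hd]
        exact hzero d hd
    have hq : monomial uij 1 * q = (g : MvPolynomial (Fin n) 𝕜) := by
      have := MvPolynomial.divMonomial_add_modMonomial (g : MvPolynomial (Fin n) 𝕜) uij
      rw [hmod, add_zero] at this
      exact this
    have hrq : (r : MvPolynomial (Fin n) 𝕜) = q * monomial ukl 1 := by
      have hne : (monomial uij (1:𝕜) : MvPolynomial (Fin n) 𝕜) ≠ 0 := by
        simp [MvPolynomial.monomial_eq_zero]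
      apply mul_left_cancel₀ hne
      calc (monomial uij 1 : MvPolynomial (Fin n) 𝕜) * (r : MvPolynomial (Fin n) 𝕜)
          = (X i * X j) * (r : MvPolynomial (Fin n) 𝕜) := by rw [huij, ← X_mul_X_eq]
        _ = (g : MvPolynomial (Fin n) 𝕜) * (X k * X l) := hS.symm
        _ = (monomial uij 1 * q) * (X k * X l) := by rw [hq]
        _ = monomial uij 1 * (q * monomial ukl 1) := by
            rw [hukl, ← X_mul_X_eq k l]; ring
    have hsupp1 : ∀ a ∈ q.support, Good (a + uij) := by
      intro a ha
      have hco : coeff (uij + a) (g : MvPolynomial (Fin n) 𝕜) = coeff a q := by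
        rw [hqdef, coeff_divMonomial]
      have hmem : uij + a ∈ (g : MvPolynomial (Fin n) 𝕜).support := by
        rw [MvPolynomial.mem_support_iff, hco]
        exact MvPolynomial.mem_support_iff.mp ha
      have := sqfVer2_le_goodAlg g.2 _ hmem
      rwa [add_comm] at this
    have hsupp2 : ∀ a ∈ q.support, Good (a + ukl) := by
      intro a ha
      have hco : coeff (a + ukl) (r : MvPolynomial (Fin n) 𝕜) = coeff a q := by
        rw [hrq, coeff_mul_monomial, mul_one]
      have hmem : a + ukl ∈ (r : MvPolynomial (Fin n) 𝕜).support := by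
        rw [MvPolynomial.mem_support_iff, hco]
        exact MvPolynomial.mem_support_iff.mp ha
      exact sqfVer2_le_goodAlg r.2 _ hmem
    -- write g as a sum of elements of the span
    have gsum : g = ∑ a ∈ q.support.attach,
        (⟨monomial ((a : Fin n →₀ ℕ) + uij) (coeff (a : Fin n →₀ ℕ) q),
          monomial_mem_of_good (hsupp1 a a.2) _⟩ : sqfVer2 𝕜 n) := by
      apply Subtype.ext
      push_cast
      rw [Finset.sum_attach q.support
        (fun a => monomial (a + uij) (coeff a q))]
      rw [← hq]
      conv_lhs => rw [q.as_sum]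
      rw [Finset.mul_sum]
      apply Finset.sum_congr rfl
      intro a ha
      rw [monomial_mul, one_mul, add_comm]
    rw [gsum]
    apply Ideal.sum_mem
    rintro ⟨a, ha⟩ -
    rcases key_lemma hik hil hjk hjl a (hsupp1 a ha) (hsupp2 a ha)
      with hgood | ⟨p, hpi, hpj, hpk, hpl, hple, hgoodb⟩
    · have heq : (⟨monomial (a + uij) (coeff a q),
          monomial_mem_of_good (hsupp1 a ha) _⟩ : sqfVer2 𝕜 n)
          = vgen 𝕜 hij * ⟨monomial a (coeff a q), monomial_mem_of_good hgood _⟩ := by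
        apply Subtype.ext
        show monomial (a + uij) (coeff a q) = (X i * X j) * monomial a (coeff a q)
        rw [show (X i * X j : MvPolynomial (Fin n) 𝕜) = monomial uij 1 from X_mul_X_eq i j,
          monomial_mul, one_mul, add_comm]
      rw [heq]
      exact Ideal.mul_mem_right _ _ (Ideal.subset_span (Set.mem_union_left _ rfl))
    · have hba : (a - Finsupp.single p 2) + Finsupp.single p 2 = a :=
        tsub_add_cancel_of_le hple
      have heq : (⟨monomial (a + uij) (coeff a q),
          monomial_mem_of_good (hsupp1 a ha) _⟩ : sqfVer2 𝕜 n)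
          = (vgen 𝕜 (Ne.symm hpi) * vgen 𝕜 (Ne.symm hpj)) *
            ⟨monomial (a - Finsupp.single p 2) (coeff a q),
              monomial_mem_of_good hgoodb _⟩ := by
        apply Subtype.ext
        show monomial (a + uij) (coeff a q)
          = (X i * X p) * (X j * X p) * monomial (a - Finsupp.single p 2) (coeff a q)
        rw [show (X i * X p : MvPolynomial (Fin n) 𝕜)
            = monomial (Finsupp.single i 1 + Finsupp.single p 1) 1 from X_mul_X_eq i p,
          show (X j * X p : MvPolynomial (Fin n) 𝕜)
            = monomial (Finsupp.single j 1 + Finsupp.single p 1) 1 from X_mul_X_eq j p,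
          monomial_mul, monomial_mul, one_mul, one_mul]
        congr 1
        have h2 : (Finsupp.single p 2 : Fin n →₀ ℕ)
            = Finsupp.single p 1 + Finsupp.single p 1 := by
          rw [← Finsupp.single_add]
        congr 1
        conv_lhs => rw [← hba]
        rw [huij]
        generalize a - Finsupp.single p 2 = b
        rw [h2]
        abel
      rw [heq]
      refine Ideal.mul_mem_right _ _ (Ideal.subset_span (Set.mem_union_right _ ?_))
      exact ⟨p, Ne.symm hpi, Ne.symm hpj, hpk, hpl, rfl⟩
  · -- easy direction
    rw [Ideal.span_le]
    rintro x hx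
    simp only [Set.mem_union, Set.mem_singleton_iff, Set.mem_setOf_eq] at hx
    rw [SetLike.mem_coe, Ideal.mem_colon_span_singleton, Ideal.mem_span_singleton]
    rcases hx with rfl | ⟨p, hip, hjp, hpk, hpl, rfl⟩
    · exact ⟨vgen 𝕜 hkl, rfl⟩
    · refine ⟨vgen 𝕜 (Ne.symm hpk : k ≠ p) * vgen 𝕜 (Ne.symm hpl : l ≠ p), ?_⟩
      apply Subtype.ext
      show ((X i * X p) * (X j * X p)) * (X k * X l)
        = (X i * X j) * ((X k * X p) * (X l * X p))
      ring
end

section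
/- Let n ≥ 4, S = K[t_1,...,t_n], and R the second squarefree Veronese subring of S. For distinct i, j, l, the element t_j t_l does NOT belong to the colon ideal (t_i t_j) : (t_i t_l) in R; that is, t_j t_l · t_i t_l ∉ (t_i t_j)R. -/
open MvPolynomial

lemma coeff_sq_zero {𝕜 : Type*} [Field 𝕜] {n : ℕ} (l : Fin n) {p : MvPolynomial (Fin n) 𝕜}
    (hp : p ∈ sqfVer2 𝕜 n) : coeff (Finsupp.single l 2) p = 0 := by
  have hspan := Algebra.adjoin_eq_span 𝕜 {m : MvPolynomial (Fin n) 𝕜 | ∃ i j : Fin n, i ≠ j ∧ m = X i * X j}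
  rw [show sqfVer2 𝕜 n = Algebra.adjoin 𝕜 _ from rfl, ← Subalgebra.mem_toSubmodule, hspan] at hp
  induction hp using Submodule.span_induction with
  | mem x hx =>
      have hmon : ∃ d : Fin n →₀ ℕ, x = monomial d 1 ∧ (∀ c : Fin n, d.support ⊆ {c} → d = 0) := by
        induction hx using Submonoid.closure_induction with
        | mem y hy =>
            obtain ⟨a, b, hab, rfl⟩ := hy
            refine ⟨Finsupp.single a 1 + Finsupp.single b 1, ?_, ?_⟩
            · rw [X, X, monomial_mul, one_mul]
            · intro c hc
              exfalso
              have ha : a ∈ (Finsupp.single a 1 + Finsupp.single b 1).support := by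
                simp [Finsupp.mem_support_iff, Finsupp.single_apply]
              have hb : b ∈ (Finsupp.single a 1 + Finsupp.single b 1).support := by
                simp [Finsupp.mem_support_iff, Finsupp.single_apply]
              exact hab ((Finset.mem_singleton.mp (hc ha)).trans
                (Finset.mem_singleton.mp (hc hb)).symm)
        | one => exact ⟨0, by simp, fun c _ => rfl⟩
        | mul y z _ _ hy hz =>
            obtain ⟨d, rfl, hd⟩ := hy
            obtain ⟨e, rfl, he⟩ := hz
            refine ⟨d + e, by rw [monomial_mul, one_mul], fun c hc => ?_⟩
            have hdc : d.support ⊆ {c} := by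
              intro a ha
              apply hc
              simp only [Finsupp.mem_support_iff, Finsupp.add_apply] at ha ⊢
              omega
            have hec : e.support ⊆ {c} := by
              intro a ha
              apply hc
              simp only [Finsupp.mem_support_iff, Finsupp.add_apply] at ha ⊢
              omega
            rw [hd c hdc, he c hec, add_zero]
      obtain ⟨d, rfl, hd⟩ := hmon
      rw [coeff_monomial, if_neg]
      intro h
      have h0 : d = 0 := hd l (by rw [h, Finsupp.support_single_ne_zero l two_ne_zero])
      rw [h0] at h
      exact two_ne_zero (Finsupp.single_eq_zero.mp h.symm)
  | zero => simp
  | add x y _ _ hx hy => rw [coeff_add, hx, hy, add_zero]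
  | smul a x _ hx => rw [coeff_smul, hx, smul_zero]

theorem stmt8 (𝕜 : Type*) [Field 𝕜] {n : ℕ} (hn : 4 ≤ n) (i j l : Fin n)
    (hij : i ≠ j) (hil : i ≠ l) (hjl : j ≠ l) :
    vgen 𝕜 hjl * vgen 𝕜 hil ∉ Ideal.span {vgen 𝕜 hij} := by
  intro h
  rw [Ideal.mem_span_singleton] at h
  obtain ⟨r, hr⟩ := h
  have hr' : (X j * X l) * (X i * X l) = (X i * X j) * (r : MvPolynomial (Fin n) 𝕜) :=
    congrArg Subtype.val hr
  have hne : (X i * X j : MvPolynomial (Fin n) 𝕜) ≠ 0 :=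
    mul_ne_zero (X_ne_zero i) (X_ne_zero j)
  have hrval : (r : MvPolynomial (Fin n) 𝕜) = X l ^ 2 := by
    apply mul_left_cancel₀ hne
    rw [← hr']; ring
  have h0 := coeff_sq_zero l r.2
  rw [hrval, X_pow_eq_monomial, coeff_monomial, if_pos rfl] at h0
  exact one_ne_zero h0
end

section
/- Let n ≥ 4 and let T = K[x_{ij} : 1 ≤ i < j ≤ n] with the K-algebra map φ: T → K[t_1,...,t_n] sending x_{ij} to t_i t_j. Then for any four pairwise distinct indices i, j, k, l, the binomial x_{ij} x_{kl} − x_{ik} x_{jl} lies in ker φ, and ker φ is generated by the set of all such binomials arising from 4-cycles of the complete graph K_n. -/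
open MvPolynomial

/-- The `𝕜`-algebra map `φ : 𝕜[x_e : e an edge of Kₙ] → 𝕜[t₁,…,tₙ]`, `x_{ij} ↦ tᵢtⱼ`. -/
noncomputable def veroneseMap (𝕜 : Type*) [Field 𝕜] (n : ℕ) :
    MvPolynomial {e : Sym2 (Fin n) // ¬ e.IsDiag} 𝕜 →ₐ[𝕜] MvPolynomial (Fin n) 𝕜 :=
  aeval fun e => Sym2.lift ⟨fun i j => (X i * X j : MvPolynomial (Fin n) 𝕜),
    fun i j => mul_comm _ _⟩ e.1

/-- The variable `x_{ij}`, for `i ≠ j`. -/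
noncomputable def xvar (𝕜 : Type*) [Field 𝕜] {n : ℕ} {i j : Fin n} (h : i ≠ j) :
    MvPolynomial {e : Sym2 (Fin n) // ¬ e.IsDiag} 𝕜 :=
  X ⟨s(i, j), by simpa using h⟩

namespace VeroAux

variable {n : ℕ}

/-- vertex-degree finsupp of an edge -/
noncomputable def degF (e : {e : Sym2 (Fin n) // ¬ e.IsDiag}) : Fin n →₀ ℕ :=
  Sym2.lift ⟨fun i j => Finsupp.single i 1 + Finsupp.single j 1,
    fun i j => add_comm _ _⟩ e.1

/-- degree map on exponents -/
noncomputable def Dfin (α : {e : Sym2 (Fin n) // ¬ e.IsDiag} →₀ ℕ) : Fin n →₀ ℕ :=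
  α.sum fun e m => m • degF e

/-- weight of exponent -/
def w (α : {e : Sym2 (Fin n) // ¬ e.IsDiag} →₀ ℕ) : ℕ := α.sum fun _ m => m

lemma degF_apply (e : {e : Sym2 (Fin n) // ¬ e.IsDiag}) (a : Fin n) :
    degF e a = if a ∈ e.1 then 1 else 0 := by
  obtain ⟨e, he⟩ := e
  induction e using Sym2.ind with
  | _ i j =>
    have hij : i ≠ j := by simpa using he
    simp only [degF, Sym2.lift_mk, Finsupp.add_apply, Finsupp.single_apply, Sym2.mem_iff]
    by_cases h1 : i = a <;> by_cases h2 : j = a <;> simp_all [eq_comm]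

lemma Dfin_add (α β : {e : Sym2 (Fin n) // ¬ e.IsDiag} →₀ ℕ) :
    Dfin (α + β) = Dfin α + Dfin β := by
  classical
  exact Finsupp.sum_add_index' (by simp) (fun e m m' => add_smul m m' (degF e))

lemma Dfin_single (e : {e : Sym2 (Fin n) // ¬ e.IsDiag}) (m : ℕ) :
    Dfin (Finsupp.single e m) = m • degF e := by
  classical
  exact Finsupp.sum_single_index (by simp)

lemma w_add (α β : {e : Sym2 (Fin n) // ¬ e.IsDiag} →₀ ℕ) : w (α + β) = w α + w β := by
  classical
  exact Finsupp.sum_add_index' (by simp) (fun _ m m' => rfl)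

lemma w_single (e : {e : Sym2 (Fin n) // ¬ e.IsDiag}) (m : ℕ) :
    w (Finsupp.single e m) = m := by
  classical
  exact Finsupp.sum_single_index rfl

lemma w_eq_zero {α : {e : Sym2 (Fin n) // ¬ e.IsDiag} →₀ ℕ} (h : w α = 0) : α = 0 := by
  classical
  ext e
  simp only [Finsupp.coe_zero, Pi.zero_apply]
  by_contra he
  have he' : e ∈ α.support := Finsupp.mem_support_iff.mpr (by simpa using he)
  have : α e ≤ w α := by
    rw [w, Finsupp.sum]
    exact Finset.single_le_sum (f := fun e' => α e') (fun _ _ => Nat.zero_le _) he'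
  omega

lemma Dfin_pos {α : {e : Sym2 (Fin n) // ¬ e.IsDiag} →₀ ℕ}
    {e : {e : Sym2 (Fin n) // ¬ e.IsDiag}} {a : Fin n}
    (he : e ∈ α.support) (ha : a ∈ e.1) : Dfin α a ≠ 0 := by
  classical
  have h1 : Dfin α a = ∑ e' ∈ α.support, α e' * degF e' a := by
    rw [Dfin, Finsupp.sum_apply]
    rfl
  have h2 : α e * degF e a ≤ ∑ e' ∈ α.support, α e' * degF e' a :=
    Finset.single_le_sum (f := fun e' => α e' * degF e' a) (fun _ _ => Nat.zero_le _) he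
  have h3 : degF e a = 1 := by rw [degF_apply]; simp [ha]
  have h4 : α e ≠ 0 := Finsupp.mem_support_iff.mp he
  rw [h3, mul_one] at h2
  omega

lemma exists_mem_of_Dfin_pos {α : {e : Sym2 (Fin n) // ¬ e.IsDiag} →₀ ℕ} {a : Fin n}
    (h : Dfin α a ≠ 0) : ∃ e ∈ α.support, a ∈ e.1 := by
  classical
  by_contra hc
  push_neg at hc
  apply h
  rw [Dfin, Finsupp.sum_apply]
  refine Finset.sum_eq_zero fun e he => ?_
  have : degF e a = 0 := by rw [degF_apply]; simp [hc e he]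
  simp [this]

lemma exists_rep (z : Sym2 (Fin n)) : ∃ i j, z = s(i, j) := by
  induction z using Sym2.ind with
  | _ i j => exact ⟨i, j, rfl⟩

lemma degF_val (e : {e : Sym2 (Fin n) // ¬ e.IsDiag}) {x y : Fin n} (h : e.1 = s(x, y)) :
    degF e = Finsupp.single x 1 + Finsupp.single y 1 := by
  rw [degF, h, Sym2.lift_mk]

lemma decomp {α : {e : Sym2 (Fin n) // ¬ e.IsDiag} →₀ ℕ} {e} (he : e ∈ α.support) :
    α = Finsupp.single e 1 + (α - Finsupp.single e 1) := by
  classical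
  have h1 : α e ≠ 0 := Finsupp.mem_support_iff.mp he
  ext a
  simp only [Finsupp.add_apply, Finsupp.tsub_apply, Finsupp.single_apply]
  by_cases h : e = a
  · subst h; simp; omega
  · simp [h]

lemma decomp2 {α : {e : Sym2 (Fin n) // ¬ e.IsDiag} →₀ ℕ} {e e'}
    (he : e ∈ α.support) (he' : e' ∈ α.support) (hne : e ≠ e') :
    α = Finsupp.single e 1 + (Finsupp.single e' 1 + (α - Finsupp.single e 1 - Finsupp.single e' 1)) := by
  classical
  have h1 : α e ≠ 0 := Finsupp.mem_support_iff.mp he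
  have h2 : α e' ≠ 0 := Finsupp.mem_support_iff.mp he'
  ext a
  simp only [Finsupp.add_apply, Finsupp.tsub_apply, Finsupp.single_apply]
  by_cases h : e = a
  · subst h
    have h2' : ¬ e' = e := fun hh => hne hh.symm
    simp [h2']
    omega
  · by_cases h' : e' = a
    · subst h'
      simp [h]
      omega
    · simp [h, h']

variable (𝕜 : Type*) [Field 𝕜]

lemma phi_X (e : {e : Sym2 (Fin n) // ¬ e.IsDiag}) :
    veroneseMap 𝕜 n (X e) = monomial (degF e) 1 := by
  obtain ⟨i, j, hij⟩ := exists_rep e.1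
  rw [veroneseMap, aeval_X, hij, Sym2.lift_mk]
  show (X i * X j : MvPolynomial (Fin n) 𝕜) = _
  rw [degF_val e hij, ← pow_one (X i), ← pow_one (X j),
    X_pow_eq_monomial, X_pow_eq_monomial, monomial_mul, one_mul]

lemma phi_monomial (α : {e : Sym2 (Fin n) // ¬ e.IsDiag} →₀ ℕ) (c : 𝕜) :
    veroneseMap 𝕜 n (monomial α c) = monomial (Dfin α) c := by
  classical
  induction α using Finsupp.induction with
  | zero => simp [Dfin]
  | single_add e m α' hnot hm ih =>
    rw [monomial_single_add, map_mul, map_pow, ih, phi_X, Dfin_add, Dfin_single,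
      monomial_pow, one_pow, monomial_mul, one_mul]

lemma binom_mem (J : Ideal (MvPolynomial {e : Sym2 (Fin n) // ¬ e.IsDiag} 𝕜))
    (hJ : ∀ (i j k l : Fin n) (hij : i ≠ j) (hkl : k ≠ l) (hik : i ≠ k) (hjl : j ≠ l),
      i ≠ l → j ≠ k → xvar 𝕜 hij * xvar 𝕜 hkl - xvar 𝕜 hik * xvar 𝕜 hjl ∈ J) :
    ∀ (N : ℕ) (α β : {e : Sym2 (Fin n) // ¬ e.IsDiag} →₀ ℕ), w α ≤ N → Dfin α = Dfin β →
      monomial α (1 : 𝕜) - monomial β 1 ∈ J := by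
  classical
  have hzero : ∀ β : {e : Sym2 (Fin n) // ¬ e.IsDiag} →₀ ℕ, Dfin β = 0 → β = 0 := by
    intro β hβ
    by_contra hβ0
    obtain ⟨e, he⟩ := Finsupp.support_nonempty_iff.mpr hβ0
    obtain ⟨i, j, hij⟩ := exists_rep e.1
    have hie : i ∈ e.1 := by rw [hij]; exact Sym2.mem_mk_left i j
    exact Dfin_pos he hie (by rw [hβ]; simp)
  intro N
  induction N with
  | zero =>
    intro α β hw hD
    have hα : α = 0 := w_eq_zero (Nat.le_zero.mp hw)
    have hβ : β = 0 := hzero β (by rw [← hD, hα]; simp [Dfin])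
    rw [hα, hβ, sub_self]
    exact J.zero_mem
  | succ N ih =>
    have key : ∀ (α β : {e : Sym2 (Fin n) // ¬ e.IsDiag} →₀ ℕ) (e), w α ≤ N + 1 →
        Dfin α = Dfin β → e ∈ α.support → e ∈ β.support →
        monomial α (1:𝕜) - monomial β 1 ∈ J := by
      intro α β e hw hD heα heβ
      have hα := decomp heα
      have hβ := decomp heβ
      have hD₁ : Dfin (α - Finsupp.single e 1) = Dfin (β - Finsupp.single e 1) := by
        have h := hD
        rw [hα, hβ, Dfin_add, Dfin_add] at h
        exact add_left_cancel h
      have hw₁ : w (α - Finsupp.single e 1) ≤ N := by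
        have h := hw
        rw [hα, w_add, w_single] at h
        omega
      have hind := ih (α - Finsupp.single e 1) (β - Finsupp.single e 1) hw₁ hD₁
      rw [hα, hβ, monomial_single_add, monomial_single_add, pow_one, ← mul_sub]
      exact J.mul_mem_left _ hind
    intro α β hw hD
    by_cases hshare : ∃ e, e ∈ α.support ∧ e ∈ β.support
    · obtain ⟨e, he1, he2⟩ := hshare
      exact key α β e hw hD he1 he2
    push_neg at hshare
    by_cases hα0 : α = 0
    · have hβ0 : β = 0 := hzero β (by rw [← hD, hα0]; simp [Dfin])
      rw [hα0, hβ0, sub_self]; exact J.zero_mem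
    obtain ⟨e, he⟩ := Finsupp.support_nonempty_iff.mpr hα0
    obtain ⟨i, j, hije⟩ := exists_rep e.1
    have hij : i ≠ j := fun h => e.2 (by rw [hije, h]; exact Sym2.mk_isDiag_iff.mpr rfl)
    have hie : i ∈ e.1 := by rw [hije]; exact Sym2.mem_mk_left i j
    have hje : j ∈ e.1 := by rw [hije]; exact Sym2.mem_mk_right i j
    have hDi : Dfin β i ≠ 0 := by rw [← hD]; exact Dfin_pos he hie
    obtain ⟨e₂, he₂, hie₂⟩ := exists_mem_of_Dfin_pos hDi
    obtain ⟨k, hk⟩ := Sym2.mem_iff_exists.mp hie₂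
    have hik : i ≠ k := fun h => e₂.2 (by rw [hk, ← h]; exact Sym2.mk_isDiag_iff.mpr rfl)
    have hkj : k ≠ j := by
      intro h
      refine hshare e he ?_
      have he₂e : e₂ = e := Subtype.ext (by rw [hk, h, hije])
      rwa [← he₂e]
    have hDj : Dfin β j ≠ 0 := by rw [← hD]; exact Dfin_pos he hje
    obtain ⟨e₃, he₃, hje₃⟩ := exists_mem_of_Dfin_pos hDj
    obtain ⟨l, hl⟩ := Sym2.mem_iff_exists.mp hje₃
    have hjl : j ≠ l := fun h => e₃.2 (by rw [hl, ← h]; exact Sym2.mk_isDiag_iff.mpr rfl)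
    have hli : l ≠ i := by
      intro h
      refine hshare e he ?_
      have he₃e : e₃ = e := Subtype.ext (by rw [hl, h, hije, Sym2.eq_swap])
      rwa [← he₃e]
    by_cases hkl : k = l
    · -- edges s(i,k), s(j,k) in β; find s(k,m) in α
      subst hkl
      have hke₂ : k ∈ e₂.1 := by rw [hk]; exact Sym2.mem_mk_right i k
      have hDk : Dfin α k ≠ 0 := by rw [hD]; exact Dfin_pos he₂ hke₂
      obtain ⟨e₄, he₄, hke₄⟩ := exists_mem_of_Dfin_pos hDk
      obtain ⟨m, hm⟩ := Sym2.mem_iff_exists.mp hke₄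
      have hkm : k ≠ m := fun h => e₄.2 (by rw [hm, ← h]; exact Sym2.mk_isDiag_iff.mpr rfl)
      have hmi : m ≠ i := by
        intro h
        refine hshare e₄ he₄ ?_
        have : e₄ = e₂ := Subtype.ext (by rw [hm, h, hk, Sym2.eq_swap])
        rwa [this]
      have hmj : m ≠ j := by
        intro h
        refine hshare e₄ he₄ ?_
        have : e₄ = e₃ := Subtype.ext (by rw [hm, h, hl, Sym2.eq_swap])
        rwa [this]
      have hee₄ : e ≠ e₄ := by
        intro h
        rw [← h, hije] at hm
        rcases Sym2.eq_iff.mp hm with ⟨h1, _⟩ | ⟨h1, _⟩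
        · exact hik h1
        · exact hmi h1.symm
      -- decompose α
      have hαd := decomp2 he he₄ hee₄
      set α₂ := α - Finsupp.single e 1 - Finsupp.single e₄ 1 with hα₂
      set eik : {e : Sym2 (Fin n) // ¬ e.IsDiag} := ⟨s(i, k), by simpa using hik⟩ with heik
      set ejm : {e : Sym2 (Fin n) // ¬ e.IsDiag} := ⟨s(j, m), by simpa using hmj.symm⟩ with hejm
      set α' := Finsupp.single eik 1 + (Finsupp.single ejm 1 + α₂) with hα'
      have hDα' : Dfin α' = Dfin α := by
        rw [hα', hαd, Dfin_add, Dfin_add, Dfin_add, Dfin_add, Dfin_single, Dfin_single,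
          Dfin_single, Dfin_single, one_smul, one_smul, one_smul, one_smul,
          degF_val e hije, degF_val e₄ hm, degF_val eik rfl, degF_val ejm rfl]
        abel
      have hwα' : w α' ≤ N + 1 := by
        have h1 : w α ≤ N + 1 := hw
        rw [hαd, w_add, w_add, w_single, w_single] at h1
        rw [hα', w_add, w_add, w_single, w_single]
        omega
      have ht1 : monomial α' (1:𝕜) - monomial β 1 ∈ J := by
        refine key α' β eik hwα' (hDα'.trans hD) ?_ ?_
        · rw [Finsupp.mem_support_iff, hα']
          simp [Finsupp.add_apply, Finsupp.single_apply]
        · have : eik = e₂ := Subtype.ext (by rw [hk])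
          rwa [this]
      have ht2 : monomial α (1:𝕜) - monomial α' 1 ∈ J := by
        have hgen := hJ i j k m hij hkm hik hmj.symm hmi.symm hkj.symm
        have hexp : monomial α (1:𝕜) - monomial α' 1 =
            (xvar 𝕜 hij * xvar 𝕜 hkm - xvar 𝕜 hik * xvar 𝕜 hmj.symm) * monomial α₂ 1 := by
          rw [hαd, hα', monomial_single_add, monomial_single_add, monomial_single_add,
            monomial_single_add, pow_one, pow_one, pow_one, pow_one]
          have hxe : (X e : MvPolynomial _ 𝕜) = xvar 𝕜 hij := by
            rw [xvar]; exact congrArg X (Subtype.ext hije)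
          have hxe₄ : (X e₄ : MvPolynomial _ 𝕜) = xvar 𝕜 hkm := by
            rw [xvar]; exact congrArg X (Subtype.ext hm)
          have hxeik : (X eik : MvPolynomial _ 𝕜) = xvar 𝕜 hik := by rw [heik, xvar]
          have hxejm : (X ejm : MvPolynomial _ 𝕜) = xvar 𝕜 hmj.symm := by rw [hejm, xvar]
          rw [hxe, hxe₄, hxeik, hxejm]
          ring
        rw [hexp]
        exact J.mul_mem_right _ hgen
      have := J.add_mem ht2 ht1
      simpa using this
    · -- k ≠ l : switch in β
      have he₂₃ : e₂ ≠ e₃ := by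
        intro h
        rw [h, hl] at hk
        rcases Sym2.eq_iff.mp hk with ⟨h1, _⟩ | ⟨h1, _⟩
        · exact hij h1.symm
        · exact hkj h1.symm
      have hβd := decomp2 he₂ he₃ he₂₃
      set β₂ := β - Finsupp.single e₂ 1 - Finsupp.single e₃ 1 with hβ₂
      set eij : {e : Sym2 (Fin n) // ¬ e.IsDiag} := ⟨s(i, j), by simpa using hij⟩ with heij
      set ekl : {e : Sym2 (Fin n) // ¬ e.IsDiag} := ⟨s(k, l), by simpa using hkl⟩ with hekl
      set β' := Finsupp.single eij 1 + (Finsupp.single ekl 1 + β₂) with hβ'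
      have hDβ' : Dfin β' = Dfin β := by
        rw [hβ', hβd, Dfin_add, Dfin_add, Dfin_add, Dfin_add, Dfin_single, Dfin_single,
          Dfin_single, Dfin_single, one_smul, one_smul, one_smul, one_smul,
          degF_val e₂ hk, degF_val e₃ hl, degF_val eij rfl, degF_val ekl rfl]
        abel
      have ht1 : monomial α (1:𝕜) - monomial β' 1 ∈ J := by
        refine key α β' eij hw (hD.trans hDβ'.symm) ?_ ?_
        · have : eij = e := Subtype.ext (by rw [hije])
          rwa [this]
        · rw [Finsupp.mem_support_iff, hβ']
          simp [Finsupp.add_apply, Finsupp.single_apply]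
      have ht2 : monomial β' (1:𝕜) - monomial β 1 ∈ J := by
        have hgen := hJ i j k l hij hkl hik hjl hli.symm hkj.symm
        have hexp : monomial β' (1:𝕜) - monomial β 1 =
            (xvar 𝕜 hij * xvar 𝕜 hkl - xvar 𝕜 hik * xvar 𝕜 hjl) * monomial β₂ 1 := by
          rw [hβd, hβ', monomial_single_add, monomial_single_add, monomial_single_add,
            monomial_single_add, pow_one, pow_one, pow_one, pow_one]
          have hxe₂ : (X e₂ : MvPolynomial _ 𝕜) = xvar 𝕜 hik := by
            rw [xvar]; exact congrArg X (Subtype.ext hk)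
          have hxe₃ : (X e₃ : MvPolynomial _ 𝕜) = xvar 𝕜 hjl := by
            rw [xvar]; exact congrArg X (Subtype.ext hl)
          have hxeij : (X eij : MvPolynomial _ 𝕜) = xvar 𝕜 hij := by rw [heij, xvar]
          have hxekl : (X ekl : MvPolynomial _ 𝕜) = xvar 𝕜 hkl := by rw [hekl, xvar]
          rw [hxe₂, hxe₃, hxeij, hxekl]
          ring
        rw [hexp]
        exact J.mul_mem_right _ hgen
      have := J.add_mem ht1 ht2
      simpa using this

lemma ker_sub (J : Ideal (MvPolynomial {e : Sym2 (Fin n) // ¬ e.IsDiag} 𝕜))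
    (hJbin : ∀ α β : {e : Sym2 (Fin n) // ¬ e.IsDiag} →₀ ℕ, Dfin α = Dfin β →
      monomial α (1 : 𝕜) - monomial β 1 ∈ J) :
    ∀ (N : ℕ) (f : MvPolynomial {e : Sym2 (Fin n) // ¬ e.IsDiag} 𝕜), f.support.card ≤ N →
      veroneseMap 𝕜 n f = 0 → f ∈ J := by
  classical
  intro N
  induction N with
  | zero =>
    intro f hcard hf
    have : f = 0 := by
      rwa [Nat.le_zero, Finset.card_eq_zero, MvPolynomial.support_eq_empty] at hcard
    rw [this]; exact J.zero_mem
  | succ N ih =>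
    intro f hcard hf
    by_cases hf0 : f = 0
    · rw [hf0]; exact J.zero_mem
    obtain ⟨α, hα⟩ : f.support.Nonempty := by
      rwa [Finset.nonempty_iff_ne_empty, ne_eq, MvPolynomial.support_eq_empty]
    set s := f.support.filter (fun β => Dfin β = Dfin α) with hs
    have hαs : α ∈ s := by rw [hs]; exact Finset.mem_filter.mpr ⟨hα, rfl⟩
    have hsmem : ∀ β ∈ s, Dfin β = Dfin α := by
      intro β hβ
      rw [hs] at hβ
      exact (Finset.mem_filter.mp hβ).2
    have hsum : ∑ β ∈ s, coeff β f = 0 := by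
      have h1 : veroneseMap 𝕜 n f = ∑ β ∈ f.support, monomial (Dfin β) (coeff β f) := by
        conv_lhs => rw [← support_sum_monomial_coeff f]
        rw [map_sum]
        exact Finset.sum_congr rfl fun β _ => phi_monomial 𝕜 β (coeff β f)
      have h0 : coeff (Dfin α) (veroneseMap 𝕜 n f) = 0 := by rw [hf]; simp
      rw [h1, MvPolynomial.coeff_sum] at h0
      rw [hs, Finset.sum_filter]
      calc ∑ β ∈ f.support, (if Dfin β = Dfin α then coeff β f else 0)
          = ∑ β ∈ f.support, coeff (Dfin α) (monomial (Dfin β) (coeff β f)) :=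
            Finset.sum_congr rfl fun β _ => (coeff_monomial (Dfin α) (Dfin β) (coeff β f)).symm
        _ = 0 := h0
    set g := f - ∑ β ∈ s, monomial β (coeff β f) with hg
    have hcoeffg : ∀ γ, coeff γ g = if γ ∈ s then 0 else coeff γ f := by
      intro γ
      rw [hg, MvPolynomial.coeff_sub, MvPolynomial.coeff_sum]
      have h2 : ∑ β ∈ s, coeff γ (monomial β (coeff β f)) = if γ ∈ s then coeff γ f else 0 := by
        rw [Finset.sum_congr rfl (fun β _ => coeff_monomial γ β (coeff β f))]
        exact Finset.sum_ite_eq' s γ (fun β => coeff β f)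
      rw [h2]
      by_cases h : γ ∈ s <;> simp [h]
    have hsub : g.support ⊆ f.support \ {α} := by
      intro γ hγ
      rw [MvPolynomial.mem_support_iff, hcoeffg] at hγ
      by_cases h : γ ∈ s
      · simp [h] at hγ
      · rw [if_neg h] at hγ
        refine Finset.mem_sdiff.mpr ⟨MvPolynomial.mem_support_iff.mpr hγ, ?_⟩
        simp only [Finset.mem_singleton]
        intro hh
        rw [hh] at h
        exact h hαs
    have hcardg : g.support.card ≤ N := by
      have h1 := Finset.card_le_card hsub
      have h2 : (f.support \ {α}).card = f.support.card - 1 := by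
        rw [Finset.card_sdiff_of_subset (Finset.singleton_subset_iff.mpr hα), Finset.card_singleton]
      have h3 : 1 ≤ f.support.card := Finset.card_pos.mpr ⟨α, hα⟩
      omega
    have hφg : veroneseMap 𝕜 n g = 0 := by
      rw [hg, map_sub, hf, zero_sub, neg_eq_zero, map_sum]
      have h3 : ∀ β ∈ s, veroneseMap 𝕜 n (monomial β (coeff β f))
          = monomial (Dfin α) (coeff β f) := by
        intro β hβ
        rw [phi_monomial, hsmem β hβ]
      rw [Finset.sum_congr rfl h3, ← map_sum (monomial (Dfin α)) (fun β => coeff β f) s, hsum,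
        map_zero]
    have hgJ : g ∈ J := ih g hcardg hφg
    have hT : ∑ β ∈ s, (coeff β f) • (monomial β (1:𝕜) - monomial α 1)
        = ∑ β ∈ s, monomial β (coeff β f) := by
      rw [Finset.sum_congr rfl (fun β _ => smul_sub (coeff β f) (monomial β (1:𝕜))
        (monomial α 1)), Finset.sum_sub_distrib, ← Finset.sum_smul, hsum, zero_smul, sub_zero]
      refine Finset.sum_congr rfl fun β _ => ?_
      rw [MvPolynomial.smul_monomial, smul_eq_mul, mul_one]
    have hfin : f = g + ∑ β ∈ s, (coeff β f) • (monomial β (1:𝕜) - monomial α 1) := by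
      rw [hT, hg, sub_add_cancel]
    rw [hfin]
    refine J.add_mem hgJ (Ideal.sum_mem J fun β hβ => ?_)
    rw [MvPolynomial.smul_eq_C_mul]
    exact J.mul_mem_left _ (hJbin β α (hsmem β hβ))

end VeroAux

theorem stmt10 (𝕜 : Type*) [Field 𝕜] {n : ℕ} (hn : 4 ≤ n) :
    (∀ (i j k l : Fin n) (hij : i ≠ j) (hkl : k ≠ l) (hik : i ≠ k) (hjl : j ≠ l),
      i ≠ l → j ≠ k →
      xvar 𝕜 hij * xvar 𝕜 hkl - xvar 𝕜 hik * xvar 𝕜 hjl ∈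
        RingHom.ker (veroneseMap 𝕜 n : _ →+* MvPolynomial (Fin n) 𝕜)) ∧
    RingHom.ker (veroneseMap 𝕜 n : _ →+* MvPolynomial (Fin n) 𝕜) =
      Ideal.span {f | ∃ (i j k l : Fin n) (hij : i ≠ j) (hkl : k ≠ l) (hik : i ≠ k)
        (hjl : j ≠ l), i ≠ l ∧ j ≠ k ∧
        f = xvar 𝕜 hij * xvar 𝕜 hkl - xvar 𝕜 hik * xvar 𝕜 hjl} := by
  classical
  have hx : ∀ (i j : Fin n) (h : i ≠ j), veroneseMap 𝕜 n (xvar 𝕜 h) = X i * X j := by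
    intro i j h
    rw [xvar, veroneseMap, aeval_X, Sym2.lift_mk]
  have part1 : ∀ (i j k l : Fin n) (hij : i ≠ j) (hkl : k ≠ l) (hik : i ≠ k) (hjl : j ≠ l),
      i ≠ l → j ≠ k →
      xvar 𝕜 hij * xvar 𝕜 hkl - xvar 𝕜 hik * xvar 𝕜 hjl ∈
        RingHom.ker (veroneseMap 𝕜 n : _ →+* MvPolynomial (Fin n) 𝕜) := by
    intro i j k l hij hkl hik hjl hil hjk
    rw [RingHom.mem_ker]
    show veroneseMap 𝕜 n _ = 0
    rw [map_sub, map_mul, map_mul, hx i j hij, hx k l hkl, hx i k hik, hx j l hjl]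
    ring
  refine ⟨part1, le_antisymm ?_ (Ideal.span_le.mpr ?_)⟩
  · intro f hf
    rw [RingHom.mem_ker] at hf
    have hf' : veroneseMap 𝕜 n f = 0 := hf
    have hgen : ∀ (i j k l : Fin n) (hij : i ≠ j) (hkl : k ≠ l) (hik : i ≠ k) (hjl : j ≠ l),
        i ≠ l → j ≠ k →
        xvar 𝕜 hij * xvar 𝕜 hkl - xvar 𝕜 hik * xvar 𝕜 hjl ∈
          Ideal.span {f | ∃ (i j k l : Fin n) (hij : i ≠ j) (hkl : k ≠ l) (hik : i ≠ k)
            (hjl : j ≠ l), i ≠ l ∧ j ≠ k ∧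
            f = xvar 𝕜 hij * xvar 𝕜 hkl - xvar 𝕜 hik * xvar 𝕜 hjl} := by
      intro i j k l hij hkl hik hjl hil hjk
      exact Ideal.subset_span ⟨i, j, k, l, hij, hkl, hik, hjl, hil, hjk, rfl⟩
    exact VeroAux.ker_sub 𝕜 _
      (fun α β hD => VeroAux.binom_mem 𝕜 _ hgen (VeroAux.w α) α β le_rfl hD)
      f.support.card f le_rfl hf'
  · rintro f ⟨i, j, k, l, hij, hkl, hik, hjl, hil, hjk, rfl⟩
    exact part1 i j k l hij hkl hik hjl hil hjk
end

section
/- Let R be the second squarefree Veronese subring of S = K[t_1,...,t_n] and let i, j, k, l be pairwise distinct indices. If a monomial f ∈ R satisfies f · t_k t_l ∈ (t_i t_j)R, then t_i t_j divides f in S. -/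
open MvPolynomial

theorem stmt12 (𝕜 : Type*) [Field 𝕜] {n : ℕ} (i j k l : Fin n)
    (hij : i ≠ j) (hik : i ≠ k) (hil : i ≠ l) (hjk : j ≠ k) (hjl : j ≠ l) (hkl : k ≠ l)
    (f : sqfVer2 𝕜 n)
    (hmono : ∃ d : Fin n →₀ ℕ, (f : MvPolynomial (Fin n) 𝕜) = monomial d 1)
    (hf : f * vgen 𝕜 hkl ∈ Ideal.span {vgen 𝕜 hij}) :
    (X i * X j : MvPolynomial (Fin n) 𝕜) ∣ (f : MvPolynomial (Fin n) 𝕜) := by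
  rw [Ideal.mem_span_singleton] at hf
  obtain ⟨a, ha⟩ := hf
  obtain ⟨d, hd⟩ := hmono
  have hdvd : (X i * X j : MvPolynomial (Fin n) 𝕜) ∣
      (f : MvPolynomial (Fin n) 𝕜) * (X k * X l) := by
    refine ⟨(a : MvPolynomial (Fin n) 𝕜), ?_⟩
    have := congrArg (Subtype.val) ha
    push_cast at this
    rw [show (vgen 𝕜 hkl : MvPolynomial (Fin n) 𝕜) = X k * X l from rfl,
      show (vgen 𝕜 hij : MvPolynomial (Fin n) 𝕜) = X i * X j from rfl] at this
    linear_combination this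
  have key : (f : MvPolynomial (Fin n) 𝕜) * (X k * X l) =
      monomial (d + Finsupp.single k 1 + Finsupp.single l 1) (1 : 𝕜) := by
    rw [hd, X, X, monomial_mul, monomial_mul, mul_one, mul_one, add_assoc]
  rw [key] at hdvd
  have hXi : (d + Finsupp.single k 1 + Finsupp.single l 1 : Fin n →₀ ℕ) i ≠ 0 := by
    have h1 : (X i : MvPolynomial (Fin n) 𝕜) ∣
        monomial (d + Finsupp.single k 1 + Finsupp.single l 1) (1 : 𝕜) :=
      dvd_trans (dvd_mul_right _ _) hdvd
    rcases X_dvd_monomial.mp h1 with h | h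
    · exact absurd h one_ne_zero
    · exact h
  have hXj : (d + Finsupp.single k 1 + Finsupp.single l 1 : Fin n →₀ ℕ) j ≠ 0 := by
    have h1 : (X j : MvPolynomial (Fin n) 𝕜) ∣
        monomial (d + Finsupp.single k 1 + Finsupp.single l 1) (1 : 𝕜) :=
      dvd_trans (dvd_mul_left _ _) hdvd
    rcases X_dvd_monomial.mp h1 with h | h
    · exact absurd h one_ne_zero
    · exact h
  have hdi : d i ≠ 0 := by
    simpa [Finsupp.single_apply, hik.symm, hil.symm] using hXi
  have hdj : d j ≠ 0 := by
    simpa [Finsupp.single_apply, hjk.symm, hjl.symm] using hXj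
  rw [hd, show (X i * X j : MvPolynomial (Fin n) 𝕜) =
      monomial (Finsupp.single i 1 + Finsupp.single j 1) (1 : 𝕜) by
    rw [X, X, monomial_mul, mul_one]]
  rw [monomial_dvd_monomial]
  refine ⟨Or.inr ?_, dvd_refl _⟩
  intro x
  simp only [Finsupp.coe_add, Pi.add_apply, Finsupp.single_apply]
  by_cases hxi : i = x
  · subst hxi
    rw [if_pos rfl, if_neg (Ne.symm hij)]
    omega
  · by_cases hxj : j = x
    · subst hxj
      rw [if_neg hxi, if_pos rfl]
      omega
    · simp [hxi, hxj]
end
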